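/- arXiv:1508.04644 — 7 statements merged into one kernel-verified Lean document; each statement's English description precedes it below -/
import Mathlib

section
/- Let U, V, W ≅ ℂ². The set of linear maps Φ : U → V ⊗ W which, after suitable changes of basis of U, V, W, take the form |1⟩ ↦ |1⟩⊗|1⟩ and |2⟩ ↦ |2⟩⊗|2⟩, is a dense open subset of Hom(U, V ⊗ W). Equivalently, identifying Φ with a pair of 2×2 matrices (A,B) via Φ|1⟩ = Σ A(i,j)|ij⟩, Φ|2⟩ = Σ B(i,j)|ij⟩, the set of pairs with det(A) ≠ 0, (tr(A⁻¹B))² − 4 det(A⁻¹B) ≠ 0, and both off-diagonal entries of A⁻¹B nonzero, consists of such maps and is open dense in M₂(ℂ) × M₂(ℂ). -/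
open scoped TensorProduct

/-- The linear map `ℂ² → ℂ² ⊗ ℂ²` determined by a pair of 2×2 matrices `(A, B)`:
`e₀ ↦ Σ A j k • (e j ⊗ e k)` and `e₁ ↦ Σ B j k • (e j ⊗ e k)`. -/
noncomputable def PhiOf (A B : Matrix (Fin 2) (Fin 2) ℂ) :
    (Fin 2 → ℂ) →ₗ[ℂ] (Fin 2 → ℂ) ⊗[ℂ] (Fin 2 → ℂ) :=
  (Pi.basisFun ℂ (Fin 2)).constr ℂ fun i =>
    ∑ j : Fin 2, ∑ k : Fin 2,
      (if i = 0 then A j k else B j k) •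
        ((Pi.basisFun ℂ (Fin 2)) j ⊗ₜ[ℂ] (Pi.basisFun ℂ (Fin 2)) k)

/-- The set of pairs `(A,B)` with `det A ≠ 0`, `A⁻¹B` having distinct eigenvalues, and
both off-diagonal entries of `A⁻¹B` nonzero. -/
def GoodPairs : Set (Matrix (Fin 2) (Fin 2) ℂ × Matrix (Fin 2) (Fin 2) ℂ) :=
  {AB | AB.1.det ≠ 0 ∧
    (Matrix.trace (AB.1⁻¹ * AB.2)) ^ 2 - 4 * (AB.1⁻¹ * AB.2).det ≠ 0 ∧
    (AB.1⁻¹ * AB.2) 0 1 ≠ 0 ∧ (AB.1⁻¹ * AB.2) 1 0 ≠ 0}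

/-!
Write `B = A * M`, so that `PhiOf A B u` is the matrix `A * (u 0 • 1 + u 1 • M)` read as a
tensor.
If `M` has distinct eigenvalues `l, l'` then `M - l' • 1` has rank one, equal up to a scalar to
`p qᵀ` for a right eigenvector `p` and a left eigenvector `q` of `M` for `l`. So
`u = (-l', 1)` is sent to `A p ⊗ q` up to a scalar, and the two choices of `l` give the bases.

Openness holds because the defining conditions are nonvanishing conditions on the continuous map
`(A, B) ↦ (A, A⁻¹ * B)` over the open set `det A ≠ 0`. For density, clearing the denominator
`det A` turns them into the nonvanishing of one polynomial in the entries of `(A, B)`, which is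
nonzero at `(1, !![0, 1; 1, 0])`; restricted to a line through such a point it is a nonzero
polynomial in one variable, with finitely many zeros.
-/

open Matrix Polynomial

theorem isOpen_setOf_det_ne_zero_and_inv_mul_mem {K n : Type*} [Field K] [TopologicalSpace K]
    [IsTopologicalDivisionRing K] [T1Space K] [Fintype n] [DecidableEq n]
    {S : Set (Matrix n n K)} (hS : IsOpen S) :
    IsOpen {AB : Matrix n n K × Matrix n n K | AB.1.det ≠ 0 ∧ AB.1⁻¹ * AB.2 ∈ S} := by
  have hU : IsOpen {AB : Matrix n n K × Matrix n n K | AB.1.det ≠ 0} :=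
    isOpen_compl_singleton.preimage (by fun_prop)
  have hcont : ContinuousOn (fun AB : Matrix n n K × Matrix n n K => AB.1⁻¹ * AB.2)
      {AB | AB.1.det ≠ 0} := fun AB hAB => by
    refine ContinuousAt.continuousWithinAt (ContinuousAt.mul ?_ continuous_snd.continuousAt)
    refine (continuousAt_matrix_inv _ ?_).comp continuous_fst.continuousAt
    rw [Ring.inverse_eq_inv']
    exact continuousAt_inv₀ hAB
  exact hcont.isOpen_inter_preimage hU hS

theorem isOpen_setOf_discr_ne_zero_and_offDiag_ne_zero {K : Type*} [Field K] [TopologicalSpace K]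
    [IsTopologicalRing K] [T1Space K] :
    IsOpen {M : Matrix (Fin 2) (Fin 2) K |
      M.trace ^ 2 - 4 * M.det ≠ 0 ∧ M 0 1 ≠ 0 ∧ M 1 0 ≠ 0} :=
  (isOpen_compl_singleton.preimage (by fun_prop)).inter <|
    (isOpen_compl_singleton.preimage (by fun_prop)).inter
      (isOpen_compl_singleton.preimage (by fun_prop))

section Density

variable {𝕜 E : Type*} [NontriviallyNormedField 𝕜] [CompleteSpace 𝕜] [AddCommGroup E]
  [Module 𝕜 E] [TopologicalSpace E] [IsTopologicalAddGroup E] [ContinuousSMul 𝕜 E]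

theorem dense_setOf_ne_zero_of_lineMap_eq_eval {f : E → 𝕜}
    (hf : ∀ x y, ∃ P : 𝕜[X], ∀ t, f (AffineMap.lineMap x y t) = P.eval t) {y : E}
    (hy : f y ≠ 0) : Dense {z | f z ≠ 0} := by
  intro x
  obtain ⟨P, hP⟩ := hf x y
  have hP0 : P ≠ 0 := by
    rintro rfl
    exact hy (by simpa using hP 1)
  have hdense : Dense {t | P.eval t ≠ 0} :=
    (finite_setOfPred_isRoot hP0).countable.dense_compl 𝕜
  simpa using map_mem_closure AffineMap.lineMap_continuous (hdense 0)
    fun t (ht : P.eval t ≠ 0) => show f _ ≠ 0 from hP t ▸ ht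

end Density

section Genericity

variable {R S : Type*} [CommRing R] [CommRing S]

def genericityPoly (A B : Matrix (Fin 2) (Fin 2) R) : R :=
  let N := A.adjugate * B
  A.det * (N.trace ^ 2 - 4 * N.det) * (N 0 1 * N 1 0)

theorem RingHom.map_genericityPoly (f : R →+* S) (A B : Matrix (Fin 2) (Fin 2) R) :
    f (genericityPoly A B) = genericityPoly (f.mapMatrix A) (f.mapMatrix B) := by
  unfold genericityPoly
  set N := A.adjugate * B
  have hN : f.mapMatrix N = (f.mapMatrix A).adjugate * f.mapMatrix B := by
    rw [map_mul, RingHom.map_adjugate]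
  have htrace : f N.trace = (f.mapMatrix N).trace := AddMonoidHom.map_trace f N
  have hentry (i j) : f (N i j) = f.mapMatrix N i j := rfl
  simp only [map_mul, map_sub, map_pow, map_ofNat, RingHom.map_det, htrace, hentry, hN]

theorem exists_genericityPoly_lineMap_eq_eval
    (x y : Matrix (Fin 2) (Fin 2) R × Matrix (Fin 2) (Fin 2) R) :
    ∃ P : R[X], ∀ t,
      genericityPoly (AffineMap.lineMap x y t).1 (AffineMap.lineMap x y t).2 = P.eval t := by
  let line (a b : Matrix (Fin 2) (Fin 2) R) : Matrix (Fin 2) (Fin 2) R[X] :=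
    a.map C + (X : R[X]) • (b - a).map C
  have hline (a b) (t : R) : (evalRingHom t).mapMatrix (line a b) = AffineMap.lineMap a b t := by
    ext i j
    simp only [line, RingHom.mapMatrix_apply, coe_evalRingHom, map_apply, Matrix.add_apply,
      Matrix.smul_apply, Matrix.sub_apply, map_sub, smul_eq_mul, eval_add, eval_C, eval_mul,
      eval_X, eval_sub, AffineMap.lineMap_apply_module']
    ring
  refine ⟨genericityPoly (line x.1 y.1) (line x.2 y.2), fun t => ?_⟩
  rw [← coe_evalRingHom, RingHom.map_genericityPoly, hline, hline]
  rfl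

end Genericity

theorem mem_goodPairs_of_genericityPoly_ne_zero {A B : Matrix (Fin 2) (Fin 2) ℂ}
    (h : genericityPoly A B ≠ 0) : (A, B) ∈ GoodPairs := by
  simp only [genericityPoly, mul_ne_zero_iff] at h
  obtain ⟨⟨hA, hdisc⟩, h01, h10⟩ := h
  have hinv : A⁻¹ * B = A.det⁻¹ • (A.adjugate * B) := by
    rw [inv_def, Ring.inverse_eq_inv, smul_mul]
  have hc : A.det⁻¹ ≠ 0 := inv_ne_zero hA
  refine ⟨hA, ?_, ?_, ?_⟩ <;> rw [hinv]
  · convert mul_ne_zero (pow_ne_zero 2 hc) hdisc using 1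
    simp only [trace_smul, det_smul, Fintype.card_fin, smul_eq_mul]
    ring
  · exact mul_ne_zero hc h01
  · exact mul_ne_zero hc h10

section NormalForm

variable {K : Type*} [Field K]

theorem linearIndependent_of_mul_sub_mul_ne_zero {a b : Fin 2 → K}
    (h : a 0 * b 1 - b 0 * a 1 ≠ 0) : LinearIndependent K fun i => ![a i, b i] :=
  linearIndependent_rows_of_det_ne_zero (A := of fun i => ![a i, b i]) <| by
    simpa [det_fin_two] using h

/-- `![M 0 1, l - M 0 0]` and `![l - M 1 1, M 0 1]` are a right and a left eigenvector of `M`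
for the eigenvalue `l`, and `M.trace - l` is the other eigenvalue. -/
theorem smul_sub_eq_vecMulVec_of_isRoot {M : Matrix (Fin 2) (Fin 2) K} {l : K}
    (hl : l ^ 2 - M.trace * l + M.det = 0) :
    M 0 1 • (M - (M.trace - l) • 1) = vecMulVec ![M 0 1, l - M 0 0] ![l - M 1 1, M 0 1] := by
  rw [trace_fin_two, det_fin_two] at hl
  ext i j
  fin_cases i <;> fin_cases j <;> simp only [trace_fin_two, Matrix.smul_apply, Matrix.sub_apply,
    one_apply_eq, one_apply_ne, ne_eq, zero_ne_one, one_ne_zero, not_false_eq_true,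
    smul_eq_mul, mul_one, mul_zero, sub_zero, vecMulVec_apply, cons_val_zero, cons_val_one,
    cons_val_fin_one, Fin.zero_eta, Fin.mk_one, Fin.isValue]
  · ring
  · linear_combination -hl
  · ring

theorem exists_smul_one_add_smul_eq_vecMulVec [IsAlgClosed K] [NeZero (2 : K)]
    {M : Matrix (Fin 2) (Fin 2) K} (hdisc : M.trace ^ 2 - 4 * M.det ≠ 0) (h01 : M 0 1 ≠ 0) :
    ∃ u v w : Fin 2 → Fin 2 → K, LinearIndependent K u ∧ LinearIndependent K v ∧
      LinearIndependent K w ∧ ∀ i, u i 0 • 1 + u i 1 • M = vecMulVec (v i) (w i) := by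
  obtain ⟨s, hs⟩ := IsAlgClosed.exists_pow_nat_eq (M.trace ^ 2 - 4 * M.det) two_pos
  have hs0 : s ≠ 0 := by
    rintro rfl
    exact hdisc (by simpa using hs.symm)
  let l : Fin 2 → K := ![(M.trace + s) / 2, (M.trace - s) / 2]
  have hroot (i : Fin 2) : l i ^ 2 - M.trace * l i + M.det = 0 := by
    fin_cases i <;>
      simp only [Fin.zero_eta, Fin.mk_one, Fin.isValue, cons_val_zero, cons_val_one,
        cons_val_fin_one, l] <;>
      field_simp <;> linear_combination hs
  have hgap : l 0 - l 1 = s := by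
    simp only [Fin.isValue, cons_val_zero, cons_val_one, cons_val_fin_one, l]
    field_simp
    ring
  refine ⟨fun i => ![-(M 0 1 * (M.trace - l i)), M 0 1], fun i => ![M 0 1, l i - M 0 0],
    fun i => ![l i - M 1 1, M 0 1], linearIndependent_of_mul_sub_mul_ne_zero ?_,
    linearIndependent_of_mul_sub_mul_ne_zero ?_, linearIndependent_of_mul_sub_mul_ne_zero ?_,
    fun i => ?_⟩
  · convert mul_ne_zero (pow_ne_zero 2 h01) hs0 using 1
    linear_combination M 0 1 ^ 2 * hgap
  · convert mul_ne_zero h01 (neg_ne_zero.mpr hs0) using 1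
    linear_combination - M 0 1 * hgap
  · convert mul_ne_zero h01 hs0 using 1
    linear_combination M 0 1 * hgap
  · rw [← smul_sub_eq_vecMulVec_of_isRoot (hroot i)]
    simp only [cons_val_zero, cons_val_one]
    module

theorem exists_smul_add_smul_eq_vecMulVec [IsAlgClosed K] [NeZero (2 : K)]
    {A B : Matrix (Fin 2) (Fin 2) K} (hA : A.det ≠ 0)
    (hdisc : (A⁻¹ * B).trace ^ 2 - 4 * (A⁻¹ * B).det ≠ 0) (h01 : (A⁻¹ * B) 0 1 ≠ 0) :
    ∃ u v w : Fin 2 → Fin 2 → K, LinearIndependent K u ∧ LinearIndependent K v ∧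
      LinearIndependent K w ∧ ∀ i, u i 0 • A + u i 1 • B = vecMulVec (v i) (w i) := by
  obtain ⟨u, v, w, hu, hv, hw, huvw⟩ := exists_smul_one_add_smul_eq_vecMulVec hdisc h01
  have hA' : IsUnit A.det := isUnit_iff_ne_zero.mpr hA
  refine ⟨u, fun i => A *ᵥ v i, w, hu,
    hv.map' (A.toLinearEquiv' (invertibleOfIsUnitDet A hA')).toLinearMap (LinearEquiv.ker _), hw,
    fun i => ?_⟩
  rw [← mul_vecMulVec, ← huvw, Matrix.mul_add, Matrix.mul_smul, Matrix.mul_smul, Matrix.mul_one,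
    mul_nonsing_inv_cancel_left _ _ hA']

end NormalForm

section TensorOfMatrix

variable {R m n : Type*} [CommSemiring R] [Fintype m] [Fintype n]

noncomputable def tensorOfMatrix (M : Matrix m n R) : (m → R) ⊗[R] (n → R) :=
  ∑ j, ∑ k, M j k • (Pi.basisFun R m j ⊗ₜ Pi.basisFun R n k)

theorem tmul_eq_tensorOfMatrix_vecMulVec (v : m → R) (w : n → R) :
    v ⊗ₜ[R] w = tensorOfMatrix (vecMulVec v w) := by
  conv_lhs => rw [← (Pi.basisFun R m).sum_repr v, ← (Pi.basisFun R n).sum_repr w]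
  simp only [tensorOfMatrix, vecMulVec_apply, TensorProduct.sum_tmul, TensorProduct.tmul_sum,
    TensorProduct.smul_tmul_smul, Pi.basisFun_repr]
  exact Finset.sum_comm

end TensorOfMatrix

theorem phiOf_apply (A B : Matrix (Fin 2) (Fin 2) ℂ) (u : Fin 2 → ℂ) :
    PhiOf A B u = tensorOfMatrix (u 0 • A + u 1 • B) := by
  simp [PhiOf, Module.Basis.constr_apply_fintype, tensorOfMatrix, Fin.sum_univ_two, add_smul,
    mul_smul, Finset.sum_add_distrib]

/-- A generic linear map `ℂ² → ℂ² ⊗ ℂ²` is, after suitable (invertible) changes of bases,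
the copy map `|i⟩ ↦ |i⟩ ⊗ |i⟩`: the set `GoodPairs` is open and dense in `M₂(ℂ) × M₂(ℂ)`,
and every pair in it gives such a map. -/
theorem stmt_5 :
    IsOpen GoodPairs ∧ Dense GoodPairs ∧
      ∀ AB ∈ GoodPairs,
        ∃ (bU bV bW : Module.Basis (Fin 2) ℂ (Fin 2 → ℂ)),
          ∀ i, PhiOf AB.1 AB.2 (bU i) = bV i ⊗ₜ[ℂ] bW i := by
  refine ⟨isOpen_setOf_det_ne_zero_and_inv_mul_mem isOpen_setOf_discr_ne_zero_and_offDiag_ne_zero,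
    ?_, ?_⟩
  · have hswap : genericityPoly (1 : Matrix (Fin 2) (Fin 2) ℂ) !![0, 1; 1, 0] ≠ 0 := by
      norm_num [genericityPoly, trace_fin_two, det_fin_two]
    exact (dense_setOf_ne_zero_of_lineMap_eq_eval exists_genericityPoly_lineMap_eq_eval
      (y := (1, !![0, 1; 1, 0])) hswap).mono fun AB h => mem_goodPairs_of_genericityPoly_ne_zero h
  · rintro ⟨A, B⟩ ⟨hA, hdisc, h01, -⟩
    obtain ⟨u, v, w, hu, hv, hw, huvw⟩ := exists_smul_add_smul_eq_vecMulVec hA hdisc h01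
    have hcard : Fintype.card (Fin 2) = Module.finrank ℂ (Fin 2 → ℂ) := by simp
    refine ⟨basisOfLinearIndependentOfCardEqFinrank hu hcard,
      basisOfLinearIndependentOfCardEqFinrank hv hcard,
      basisOfLinearIndependentOfCardEqFinrank hw hcard, fun i => ?_⟩
    simp [phiOf_apply, tmul_eq_tensorOfMatrix_vecMulVec, huvw]
end

section
/- Let (A,B) ∈ M₂(ℂ)² satisfy: det(A) ≠ 0, the matrix A⁻¹B has two distinct eigenvalues λ₁ ≠ λ₂, and both off-diagonal entries of A⁻¹B are nonzero. Then for i = 1,2 the matrices D_i = λ_i I − A⁻¹B are nonzero of rank 1, and there exist bases {u₁,u₂} and {v₁,v₂} of ℂ² (column and row vectors) with D_i = u_i · v_i, such that {A u₁, A u₂} and {v₁, v₂} are each bases of ℂ². -/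
/-!
Write `M = A⁻¹B`. Since `det (l • 1 - M) = 0` and `M 0 1 ≠ 0`, the second row of `l • 1 - M` is a
multiple of its first row `(l - M 0 0, -M 0 1)`, so `l • 1 - M = u ⬝ v` with
`u = (1, (M 1 1 - l) / M 0 1)` and `v = (l - M 0 0, -M 0 1)`. Both `u i` and `v i` depend affinely
on `l i` with nonzero slope, so distinct eigenvalues make each family independent, and the
invertible `A` preserves independence of the `u i`.
-/

open Matrix

theorem Matrix.rank_eq_zero_iff {m n K : Type*} [Fintype n] [Field K] {M : Matrix m n K} :
    M.rank = 0 ↔ M = 0 := by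
  classical
  rw [Matrix.rank, Submodule.finrank_eq_zero, LinearMap.range_eq_bot, ← toLin'_apply',
    LinearEquiv.map_eq_zero_iff]

theorem Matrix.rank_vecMulVec_eq_one {m n K : Type*} [Fintype n] [Field K] {u : m → K}
    {v : n → K} (hu : u ≠ 0) (hv : v ≠ 0) : (vecMulVec u v).rank = 1 := by
  refine le_antisymm (rank_vecMulVec_le u v) (Nat.one_le_iff_ne_zero.2 ?_)
  obtain ⟨i, hi⟩ := Function.ne_iff.1 hu
  obtain ⟨j, hj⟩ := Function.ne_iff.1 hv
  rw [Ne, rank_eq_zero_iff]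
  exact fun h ↦ mul_ne_zero hi hj (congrFun (congrFun h i) j)

theorem Matrix.linearIndependent_of_det_fin_two_ne_zero {K : Type*} [Field K]
    (w : Fin 2 → Fin 2 → K) (h : w 0 0 * w 1 1 - w 0 1 * w 1 0 ≠ 0) :
    LinearIndependent K w := by
  have hdet : (of w).det ≠ 0 := by rwa [det_fin_two]
  exact linearIndependent_rows_iff_isUnit.2 ((isUnit_iff_isUnit_det _).2 hdet.isUnit)

theorem Matrix.smul_one_sub_eq_vecMulVec_of_det_eq_zero {K : Type*} [Field K]
    {M : Matrix (Fin 2) (Fin 2) K} {l : K} (hdet : (l • 1 - M).det = 0) (h01 : M 0 1 ≠ 0) :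
    l • 1 - M = vecMulVec ![1, (M 1 1 - l) / M 0 1] ![l - M 0 0, -M 0 1] := by
  rw [det_fin_two] at hdet
  ext a b
  fin_cases a <;> fin_cases b <;> simp [vecMulVec_apply] at hdet ⊢
  · field_simp
    linear_combination hdet
  · field_simp
    ring

theorem stmt_6_general (A B : Matrix (Fin 2) (Fin 2) ℂ) (hA : A.det ≠ 0)
    (l : Fin 2 → ℂ) (hl : l 0 ≠ l 1)
    (heig : ∀ i, ((l i) • (1 : Matrix (Fin 2) (Fin 2) ℂ) - A⁻¹ * B).det = 0)
    (h01 : (A⁻¹ * B) 0 1 ≠ 0) :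
    (∀ i, ((l i) • (1 : Matrix (Fin 2) (Fin 2) ℂ) - A⁻¹ * B) ≠ 0 ∧
      ((l i) • (1 : Matrix (Fin 2) (Fin 2) ℂ) - A⁻¹ * B).rank = 1) ∧
    ∃ u v : Fin 2 → (Fin 2 → ℂ),
      (∀ i, (l i) • (1 : Matrix (Fin 2) (Fin 2) ℂ) - A⁻¹ * B
          = Matrix.vecMulVec (u i) (v i)) ∧
      LinearIndependent ℂ u ∧ LinearIndependent ℂ v ∧
      LinearIndependent ℂ (fun i => A.mulVec (u i)) := by
  set M := A⁻¹ * B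
  set u : Fin 2 → Fin 2 → ℂ := fun i ↦ ![1, (M 1 1 - l i) / M 0 1]
  set v : Fin 2 → Fin 2 → ℂ := fun i ↦ ![l i - M 0 0, -M 0 1]
  have hD i : l i • 1 - M = vecMulVec (u i) (v i) :=
    smul_one_sub_eq_vecMulVec_of_det_eq_zero (heig i) h01
  have hu0 i : u i ≠ 0 := fun h ↦ one_ne_zero (congrFun h 0)
  have hv0 i : v i ≠ 0 := fun h ↦ h01 (neg_eq_zero.1 (congrFun h 1))
  have hu : LinearIndependent ℂ u := by
    refine linearIndependent_of_det_fin_two_ne_zero u ?_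
    have : u 0 0 * u 1 1 - u 0 1 * u 1 0 = (l 0 - l 1) / M 0 1 := by simp [u]; ring
    rw [this]
    exact div_ne_zero (sub_ne_zero.2 hl) h01
  have hv : LinearIndependent ℂ v := by
    refine linearIndependent_of_det_fin_two_ne_zero v ?_
    have : v 0 0 * v 1 1 - v 0 1 * v 1 0 = M 0 1 * (l 1 - l 0) := by simp [v]; ring
    rw [this]
    exact mul_ne_zero h01 (sub_ne_zero.2 hl.symm)
  have hA_ker : LinearMap.ker A.mulVecLin = ⊥ :=
    LinearMap.ker_eq_bot.2 (mulVec_injective_iff_isUnit.2 ((isUnit_iff_isUnit_det A).2 hA.isUnit))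
  refine ⟨fun i ↦ ?_, u, v, hD, hu, hv, hu.map' A.mulVecLin hA_ker⟩
  rw [hD i]
  exact ⟨fun h ↦ (vecMulVec_eq_zero.1 h).elim (hu0 i) (hv0 i),
    rank_vecMulVec_eq_one (hu0 i) (hv0 i)⟩

/-- Key lemma for GHZ-equivalence of generic 2×2×2 tensors: if `det A ≠ 0`, `A⁻¹B` has two
distinct eigenvalues `l 0 ≠ l 1` and both off-diagonal entries of `A⁻¹B` are nonzero, then
`D i = l i • 1 − A⁻¹B` are nonzero rank-1 matrices, `D i = uᵢ ⬝ vᵢ` with `{u₁,u₂}`, `{v₁,v₂}`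
and `{Au₁, Au₂}` each bases (linearly independent 2-element families) of `ℂ²`. -/
theorem stmt_6 (A B : Matrix (Fin 2) (Fin 2) ℂ) (hA : A.det ≠ 0)
    (l : Fin 2 → ℂ) (hl : l 0 ≠ l 1)
    (heig : ∀ i, ((l i) • (1 : Matrix (Fin 2) (Fin 2) ℂ) - A⁻¹ * B).det = 0)
    (h01 : (A⁻¹ * B) 0 1 ≠ 0) (h10 : (A⁻¹ * B) 1 0 ≠ 0) :
    (∀ i, ((l i) • (1 : Matrix (Fin 2) (Fin 2) ℂ) - A⁻¹ * B) ≠ 0 ∧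
      ((l i) • (1 : Matrix (Fin 2) (Fin 2) ℂ) - A⁻¹ * B).rank = 1) ∧
    ∃ u v : Fin 2 → (Fin 2 → ℂ),
      (∀ i, (l i) • (1 : Matrix (Fin 2) (Fin 2) ℂ) - A⁻¹ * B
          = Matrix.vecMulVec (u i) (v i)) ∧
      LinearIndependent ℂ u ∧ LinearIndependent ℂ v ∧
      LinearIndependent ℂ (fun i => A.mulVec (u i)) :=
  stmt_6_general A B hA l hl heig h01
end

section
/- Consider three qudits of dimensions 3, 2, 3 with two projectors: Π₁ = |φ⟩⟨φ| of rank 1 acting on qudits 1 and 2, and Π₂ of rank 5 acting on qudits 2 and 3. Suppose Π₂ has a one-dimensional kernel spanned by |ψ⟩ ∈ ℂ²⊗ℂ³. Write |φ⟩ = Σ_{i=1}^{2} λ_i |α_i⟩⊗|β_i⟩ via Schmidt decomposition, and let |α₃⟩ ∈ ℂ³ complete {|α₁⟩,|α₂⟩} to an orthonormal basis (when λ₁λ₂ ≠ 0). Then the state |Ω⟩ = |α₃⟩ ⊗ |ψ⟩ is a nonzero state annihilated by both Π₁ ⊗ I and I ⊗ Π₂, so the satisfying subspace of H = Π₁⊗I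 + I⊗Π₂ is nontrivial. -/
/-! Writing `φ = Σᵢ λᵢ αᵢ ⊗ βᵢ`, contracting `φ̄` with `α₃` on the first factor gives
`Σᵢ λᵢ ⟪αᵢ, α₃⟫ β̄ᵢ = 0`, so the rank-one projector `|φ⟩⟨φ|` kills `α₃ ⊗ ξ` for every `ξ`;
`I ⊗ Π₂` kills `α₃ ⊗ ψ` because `Π₂ ψ = 0`. -/

open Finset

section

variable {ι m n k : Type*}

lemma sum_conj_mul_eq_zero_of_inner_eq_zero [Fintype ι] [Fintype m] (c : ι → ℂ)
    (α : ι → EuclideanSpace ℂ m) (β : ι → n → ℂ) (v : EuclideanSpace ℂ m)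
    (hv : ∀ i, inner ℂ (α i) v = 0) (b : n) :
    ∑ a, starRingEnd ℂ (∑ i, c i * α i a * β i b) * v a = 0 := by
  calc ∑ a, starRingEnd ℂ (∑ i, c i * α i a * β i b) * v a
      = ∑ i, starRingEnd ℂ (c i * β i b) * inner ℂ (α i) v := by
        simp only [EuclideanSpace.inner_eq_star_dotProduct, dotProduct, map_sum, map_mul,
          sum_mul, mul_sum]
        rw [sum_comm]
        refine sum_congr rfl fun i _ => sum_congr rfl fun a _ => ?_
        simp only [Pi.star_apply, RCLike.star_def]
        ring
    _ = 0 := by simp [hv]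

lemma sum_rankOne_mul_tmul_eq_zero [Fintype m] [Fintype n] (φ : m × n → ℂ) (u : m → ℂ)
    (ξ : n × k → ℂ) (hu : ∀ b, ∑ a, starRingEnd ℂ (φ (a, b)) * u a = 0) (p : m × n) (c : k) :
    ∑ q : m × n, φ p * starRingEnd ℂ (φ q) * (u q.1 * ξ (q.2, c)) = 0 := by
  calc ∑ q : m × n, φ p * starRingEnd ℂ (φ q) * (u q.1 * ξ (q.2, c))
      = φ p * ∑ b, ξ (b, c) * ∑ a, starRingEnd ℂ (φ (a, b)) * u a := by
        simp only [Fintype.sum_prod_type, mul_sum]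
        rw [sum_comm]
        refine sum_congr rfl fun b _ => sum_congr rfl fun a _ => ?_
        ring
    _ = 0 := by simp [hu]

lemma sum_mul_mul_eq_mul_mulVec [Fintype n] (A : Matrix n n ℂ) (x : ℂ) (ξ : n → ℂ) (r : n) :
    ∑ q, A r q * (x * ξ q) = x * A.mulVec ξ r := by
  simp only [Matrix.mulVec, dotProduct, mul_sum]
  exact sum_congr rfl fun q _ => by ring

lemma mul_fst_snd_ne_zero {u : m → ℂ} {v : n → ℂ} (hu : u ≠ 0) (hv : v ≠ 0) :
    (fun p : m × n => u p.1 * v p.2) ≠ 0 := by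
  obtain ⟨a, ha⟩ := Function.ne_iff.mp hu
  obtain ⟨b, hb⟩ := Function.ne_iff.mp hv
  exact Function.ne_iff.mpr ⟨(a, b), mul_ne_zero ha hb⟩

end

theorem stmt_14_general
    (Pi1 : Matrix (Fin 3 × Fin 2) (Fin 3 × Fin 2) ℂ)
    (Pi2 : Matrix (Fin 2 × Fin 3) (Fin 2 × Fin 3) ℂ)
    (φ : Fin 3 × Fin 2 → ℂ)
    (hPi1 : ∀ p q, Pi1 p q = φ p * (starRingEnd ℂ) (φ q))
    (lam : Fin 2 → ℝ)
    (α : Fin 2 → EuclideanSpace ℂ (Fin 3)) (β : Fin 2 → EuclideanSpace ℂ (Fin 2))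
    (hφ : ∀ a b, φ (a, b) = ∑ i, (lam i : ℂ) * α i a * β i b)
    (α₃ : EuclideanSpace ℂ (Fin 3)) (hα₃n : ‖α₃‖ = 1)
    (hα₃o : ∀ i, (inner ℂ (α i) α₃ : ℂ) = 0)
    (ψ : Fin 2 × Fin 3 → ℂ) (hψ : ψ ≠ 0) (hker : Pi2.mulVec ψ = 0) :
    (fun p : Fin 3 × Fin 2 × Fin 3 => α₃ p.1 * ψ p.2) ≠ 0 ∧
    (∀ p : Fin 3 × Fin 2 × Fin 3,
      (∑ q : Fin 3 × Fin 2, Pi1 (p.1, p.2.1) q * (α₃ q.1 * ψ (q.2, p.2.2))) = 0) ∧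
    (∀ p : Fin 3 × Fin 2 × Fin 3,
      (∑ q : Fin 2 × Fin 3, Pi2 (p.2.1, p.2.2) q * (α₃ p.1 * ψ q)) = 0) := by
  have hα₃ : (α₃ : Fin 3 → ℂ) ≠ 0 := by
    rintro h
    simp [show α₃ = 0 from PiLp.ext (congrFun h)] at hα₃n
  have hφα₃ : ∀ b, ∑ a, starRingEnd ℂ (φ (a, b)) * α₃ a = 0 := fun b => by
    simpa only [hφ] using
      sum_conj_mul_eq_zero_of_inner_eq_zero (fun i => (lam i : ℂ)) α (fun i => β i) α₃ hα₃o b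
  refine ⟨mul_fst_snd_ne_zero hα₃ hψ, fun p => ?_, fun p => ?_⟩
  · simpa only [hPi1] using sum_rankOne_mul_tmul_eq_zero φ α₃ ψ hφα₃ (p.1, p.2.1) p.2.2
  · rw [sum_mul_mul_eq_mul_mulVec, hker, Pi.zero_apply, mul_zero]

/-- Three qudits of dimensions 3, 2, 3 with a rank-1 projector `Π₁ = |φ⟩⟨φ|` on qudits 1,2
and a projector `Π₂` on qudits 2,3 whose kernel contains a nonzero `ψ`: if
`φ = Σᵢ λᵢ αᵢ ⊗ βᵢ` is a Schmidt decomposition and `α₃` completes `{α₁, α₂}` to an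
orthonormal basis of `ℂ³`, then `Ω = α₃ ⊗ ψ` is a nonzero simultaneous zero state of
`Π₁ ⊗ I` and `I ⊗ Π₂`, so the satisfying subspace is nontrivial. -/
theorem stmt_14
    (Pi1 : Matrix (Fin 3 × Fin 2) (Fin 3 × Fin 2) ℂ)
    (Pi2 : Matrix (Fin 2 × Fin 3) (Fin 2 × Fin 3) ℂ)
    (φ : Fin 3 × Fin 2 → ℂ)
    (hPi1 : ∀ p q, Pi1 p q = φ p * (starRingEnd ℂ) (φ q))
    (lam : Fin 2 → ℝ) (hlam : ∀ i, 0 < lam i)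
    (α : Fin 2 → EuclideanSpace ℂ (Fin 3)) (β : Fin 2 → EuclideanSpace ℂ (Fin 2))
    (hα : Orthonormal ℂ α) (hβ : Orthonormal ℂ β)
    (hφ : ∀ a b, φ (a, b) = ∑ i, (lam i : ℂ) * α i a * β i b)
    (α₃ : EuclideanSpace ℂ (Fin 3)) (hα₃n : ‖α₃‖ = 1)
    (hα₃o : ∀ i, (inner ℂ (α i) α₃ : ℂ) = 0)
    (ψ : Fin 2 × Fin 3 → ℂ) (hψ : ψ ≠ 0) (hker : Pi2.mulVec ψ = 0) :
    (fun p : Fin 3 × Fin 2 × Fin 3 => α₃ p.1 * ψ p.2) ≠ 0 ∧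
    (∀ p : Fin 3 × Fin 2 × Fin 3,
      (∑ q : Fin 3 × Fin 2, Pi1 (p.1, p.2.1) q * (α₃ q.1 * ψ (q.2, p.2.2))) = 0) ∧
    (∀ p : Fin 3 × Fin 2 × Fin 3,
      (∑ q : Fin 2 × Fin 3, Pi2 (p.2.1, p.2.2) q * (α₃ p.1 * ψ q)) = 0) :=
  stmt_14_general Pi1 Pi2 φ hPi1 lam α β hφ α₃ hα₃n hα₃o ψ hψ hker
end

section
/- Let d₁ = d₃ = 3, d₂ = 2. For all linear maps T₁ : ℂ^5 → ℂ³ ⊗ ℂ² and T₂ : ℂ² ⊗ ℂ³ → ℂ^5, the rank of the map (Id_{ℂ³} ⊗ T₂) ∘ (T₁ ⊗ Id_{ℂ³}) : ℂ^5 ⊗ ℂ³ → ℂ³ ⊗ ℂ^5 is at most 14, and there exist T₁, T₂ achieving rank exactly 14. (In particular, the quantum max-flow of this network is 14, strictly less than the quantum min-cut 15.) -/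
/-!
Over a bond of dimension 2 the network is `A₀ ⊗ B₀ + A₁ ⊗ B₁` with `Aⱼ : ℂ⁵ → ℂ³` and
`Bⱼ : ℂ³ → ℂ⁵`, so it suffices to find a nonzero kernel vector. If `A₀` and `A₁` share a kernel
vector `u`, take `u ⊗ w`. Otherwise, since `dim ker Aⱼ ≥ 2`, dimension counting gives
`u₀ ∈ ker A₀`, `u₁ ∈ ker A₁`, not both zero, with `A₁ u₀ + A₀ u₁ = 0`, and `(w₀, w₁) ≠ 0` in
`ℂ³ × ℂ³` with `B₁ w₀ = B₀ w₁`; then `u₀ ⊗ w₀ + u₁ ⊗ w₁` is a nonzero kernel vector.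

Rank 14 is attained when `Aⱼ` restricts `ℂ⁵` to the window `{2j, 2j+1, 2j+2}` of coordinates and
`Bⱼ` extends by zero from it: the image then contains every `eₐ ⊗ eₘ` except along the one
direction `e₀ ⊗ e₃`, which is only reached together with `e₂ ⊗ e₁`.
-/

open scoped TensorProduct

noncomputable section

/-- The contracted map `(Id_{ℂ³} ⊗ T₂) ∘ (T₁ ⊗ Id_{ℂ³}) : ℂ⁵ ⊗ ℂ³ → ℂ³ ⊗ ℂ⁵` of the network
with input capacities 5, 3, internal edge of capacity 2, and output capacities 3, 5. -/
def network16 (T₁ : (Fin 5 → ℂ) →ₗ[ℂ] (Fin 3 → ℂ) ⊗[ℂ] (Fin 2 → ℂ))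
    (T₂ : (Fin 2 → ℂ) ⊗[ℂ] (Fin 3 → ℂ) →ₗ[ℂ] (Fin 5 → ℂ)) :
    (Fin 5 → ℂ) ⊗[ℂ] (Fin 3 → ℂ) →ₗ[ℂ] (Fin 3 → ℂ) ⊗[ℂ] (Fin 5 → ℂ) :=
  TensorProduct.map LinearMap.id T₂ ∘ₗ
    (TensorProduct.assoc ℂ (Fin 3 → ℂ) (Fin 2 → ℂ) (Fin 3 → ℂ)).toLinearMap ∘ₗ
    TensorProduct.map T₁ LinearMap.id

open Module TensorProduct LinearMap

section Contraction

variable {R U V E W X ι : Type*} [CommSemiring R]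
  [AddCommMonoid U] [Module R U] [AddCommMonoid V] [Module R V] [AddCommMonoid E] [Module R E]
  [AddCommMonoid W] [Module R W] [AddCommMonoid X] [Module R X]

def contractBond (T₁ : U →ₗ[R] V ⊗[R] E) (T₂ : E ⊗[R] W →ₗ[R] X) :
    U ⊗[R] W →ₗ[R] V ⊗[R] X :=
  map LinearMap.id T₂ ∘ₗ (TensorProduct.assoc R V E W).toLinearMap ∘ₗ map T₁ LinearMap.id

theorem contractBond_eq_sum_map [Fintype ι] (b : Basis ι R E) (T₁ : U →ₗ[R] V ⊗[R] E)
    (T₂ : E ⊗[R] W →ₗ[R] X) :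
    contractBond T₁ T₂ = ∑ i, map ((TensorProduct.rid R V).toLinearMap ∘ₗ
      lTensor V (b.coord i) ∘ₗ T₁) (T₂ ∘ₗ TensorProduct.mk R E W (b i)) := by
  refine TensorProduct.ext' fun u w => ?_
  simp only [contractBond, coe_comp, Function.comp_apply, map_tmul, LinearMap.id_coe, id_eq,
    LinearMap.coe_sum, Finset.sum_apply, LinearEquiv.coe_coe, mk_apply]
  induction T₁ u using TensorProduct.induction_on with
  | zero => simp
  | tmul v e =>
    simp only [assoc_tmul, map_tmul, id_coe, id_eq, lTensor_tmul, rid_tmul, Basis.coord_apply]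
    conv_lhs => rw [← b.sum_repr e]
    simp only [sum_tmul, map_sum, tmul_sum, ← smul_tmul', map_smul, tmul_smul]
  | add z₁ z₂ h₁ h₂ => simp only [map_add, add_tmul, h₁, h₂, Finset.sum_add_distrib]

def bondLeft [Fintype ι] [DecidableEq ι] (A : ι → U →ₗ[R] V) : U →ₗ[R] V ⊗[R] (ι → R) :=
  ∑ i, (TensorProduct.mk R V (ι → R)).flip (Pi.single i 1) ∘ₗ A i

def bondRight [Fintype ι] (B : ι → W →ₗ[R] X) : (ι → R) ⊗[R] W →ₗ[R] X :=
  ∑ i, B i ∘ₗ (TensorProduct.lid R W).toLinearMap ∘ₗ rTensor W (LinearMap.proj i)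

theorem contractBond_bondLeft_bondRight [Fintype ι] [DecidableEq ι] (A : ι → U →ₗ[R] V)
    (B : ι → W →ₗ[R] X) : contractBond (bondLeft A) (bondRight B) = ∑ i, map (A i) (B i) := by
  refine TensorProduct.ext' fun u w => ?_
  simp [contractBond, bondLeft, bondRight, sum_tmul, Pi.single_apply, apply_ite]

end Contraction

section RankBound

variable {K U V E W X : Type*} [Field K] [AddCommGroup U] [Module K U] [AddCommGroup V]
  [Module K V] [AddCommGroup E] [Module K E] [AddCommGroup W] [Module K W] [AddCommGroup X]
  [Module K X]

theorem TensorProduct.tmul_ne_zero {v : V} {w : W} (hv : v ≠ 0) (hw : w ≠ 0) :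
    v ⊗ₜ[K] w ≠ 0 :=
  ((linearIndependent_unique_iff (v := fun _ : Unit => v)).2 hv).tmul_of_isDomain
    ((linearIndependent_unique_iff (v := fun _ : Unit => w)).2 hw) |>.ne_zero ((), ())

variable [FiniteDimensional K U] [FiniteDimensional K V] [FiniteDimensional K W]
  [FiniteDimensional K X]

theorem exists_ne_zero_apply_add_apply_eq_zero (f : U →ₗ[K] X) (g : W →ₗ[K] X)
    (h : finrank K X < finrank K U + finrank K W) :
    ∃ p : U × W, p ≠ 0 ∧ f p.1 + g p.2 = 0 := by
  obtain ⟨p, hp, hp0⟩ := (Submodule.ne_bot_iff _).1 <|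
    (f.coprod g).ker_ne_bot_of_finrank_lt (by rwa [finrank_prod])
  exact ⟨p, hp0, hp⟩

theorem finrank_sub_finrank_le_finrank_ker (A : U →ₗ[K] V) :
    finrank K U - finrank K V ≤ finrank K (ker A) := by
  have := A.finrank_range_add_finrank_ker
  have := (range A).finrank_le
  omega

theorem ker_map_add_map_ne_bot (A₀ A₁ : U →ₗ[K] V) (B₀ B₁ : W →ₗ[K] X)
    (hA : 3 * finrank K V < 2 * finrank K U) (hB : finrank K X < 2 * finrank K W) :
    ker (map A₀ B₀ + map A₁ B₁) ≠ ⊥ := by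
  rw [Submodule.ne_bot_iff]
  have : Nontrivial W := Module.finrank_pos_iff (R := K).1 (by omega)
  obtain ⟨w, hw⟩ := exists_ne (0 : W)
  by_cases hcommon : ∃ u : U, u ≠ 0 ∧ A₀ u = 0 ∧ A₁ u = 0
  · obtain ⟨u, hu, h₀, h₁⟩ := hcommon
    exact ⟨u ⊗ₜ w, by simp [h₀, h₁], tmul_ne_zero hu hw⟩
  push Not at hcommon
  obtain ⟨⟨⟨u₀, hu₀⟩, ⟨u₁, hu₁⟩⟩, hu, hAu⟩ := exists_ne_zero_apply_add_apply_eq_zero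
    (A₁ ∘ₗ (ker A₀).subtype) (A₀ ∘ₗ (ker A₁).subtype) (by
      have := finrank_sub_finrank_le_finrank_ker A₀
      have := finrank_sub_finrank_le_finrank_ker A₁
      omega)
  obtain ⟨⟨w₀, w₁⟩, hw, hBw⟩ := exists_ne_zero_apply_add_apply_eq_zero B₁ (-B₀) (by omega)
  replace hu₀ : A₀ u₀ = 0 := hu₀
  replace hu₁ : A₁ u₁ = 0 := hu₁
  replace hAu : A₁ u₀ = -A₀ u₁ := eq_neg_of_add_eq_zero_left hAu
  replace hBw : B₁ w₀ = B₀ w₁ := add_neg_eq_zero.1 hBw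
  have hA₀u₁ : A₀ u₁ ≠ 0 := by
    intro h
    have hu₁0 : u₁ = 0 := by_contra fun h' => hcommon u₁ h' h hu₁
    have hu₀0 : u₀ = 0 := by_contra fun h' => hcommon u₀ h' hu₀ (by simpa [h] using hAu)
    exact hu (by simp [hu₀0, hu₁0])
  refine ⟨u₀ ⊗ₜ w₀ + u₁ ⊗ₜ w₁, by simp [hu₀, hu₁, hAu, hBw, neg_tmul], fun hx => hw ?_⟩
  have h₀ := congrArg (rTensor W A₀) hx
  have h₁ := congrArg (rTensor W A₁) hx
  simp only [map_add, rTensor_tmul, hu₀, hu₁, hAu, zero_tmul, add_zero, zero_add,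
    map_zero] at h₀ h₁
  have hw₁ : w₁ = 0 := by_contra fun h => tmul_ne_zero hA₀u₁ h h₀
  have hw₀ : w₀ = 0 := by_contra fun h => tmul_ne_zero (neg_ne_zero.2 hA₀u₁) h h₁
  simp [hw₀, hw₁]

theorem finrank_range_contractBond_lt [FiniteDimensional K E] (hE : finrank K E = 2)
    (T₁ : U →ₗ[K] V ⊗[K] E) (T₂ : E ⊗[K] W →ₗ[K] X) (hA : 3 * finrank K V < 2 * finrank K U)
    (hB : finrank K X < 2 * finrank K W) :
    finrank K (range (contractBond T₁ T₂)) < finrank K U * finrank K W := by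
  have hker : ker (contractBond T₁ T₂) ≠ ⊥ := by
    rw [contractBond_eq_sum_map (finBasisOfFinrankEq K E hE), Fin.sum_univ_two]
    exact ker_map_add_map_ne_bot _ _ _ _ hA hB
  have hrank := (contractBond T₁ T₂).finrank_range_add_finrank_ker
  have := Submodule.one_le_finrank_iff.2 hker
  rw [finrank_tensorProduct] at hrank
  omega

end RankBound

theorem network16_eq_contractBond (T₁ : (Fin 5 → ℂ) →ₗ[ℂ] (Fin 3 → ℂ) ⊗[ℂ] (Fin 2 → ℂ))
    (T₂ : (Fin 2 → ℂ) ⊗[ℂ] (Fin 3 → ℂ) →ₗ[ℂ] (Fin 5 → ℂ)) :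
    network16 T₁ T₂ = contractBond T₁ T₂ :=
  rfl

theorem finrank_range_network16_le (T₁ : (Fin 5 → ℂ) →ₗ[ℂ] (Fin 3 → ℂ) ⊗[ℂ] (Fin 2 → ℂ))
    (T₂ : (Fin 2 → ℂ) ⊗[ℂ] (Fin 3 → ℂ) →ₗ[ℂ] (Fin 5 → ℂ)) :
    finrank ℂ (range (network16 T₁ T₂)) ≤ 14 := by
  have := finrank_range_contractBond_lt (by simp) T₁ T₂ (by simp) (by simp)
  rw [← network16_eq_contractBond] at this
  simp only [finrank_fin_fun] at this
  omega

section Example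

local notation "e₃" => Pi.basisFun ℂ (Fin 3)
local notation "e₅" => Pi.basisFun ℂ (Fin 5)

def restrictWindow (j : Fin 2) : (Fin 5 → ℂ) →ₗ[ℂ] (Fin 3 → ℂ) :=
  Basis.constr e₅ ℂ (![![e₃ 0, e₃ 1, e₃ 2, 0, 0], ![0, 0, e₃ 0, e₃ 1, e₃ 2]] j)

def extendWindow (j : Fin 2) : (Fin 3 → ℂ) →ₗ[ℂ] (Fin 5 → ℂ) :=
  Basis.constr e₃ ℂ (![![e₅ 0, e₅ 1, e₅ 2], ![e₅ 2, e₅ 3, e₅ 4]] j)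

theorem restrictWindow_basisFun (j : Fin 2) (k : Fin 5) :
    restrictWindow j (e₅ k) = ![![e₃ 0, e₃ 1, e₃ 2, 0, 0], ![0, 0, e₃ 0, e₃ 1, e₃ 2]] j k :=
  Basis.constr_basis _ _ _ _

theorem extendWindow_basisFun (j : Fin 2) (l : Fin 3) :
    extendWindow j (e₃ l) = ![![e₅ 0, e₅ 1, e₅ 2], ![e₅ 2, e₅ 3, e₅ 4]] j l :=
  Basis.constr_basis _ _ _ _

local notation "N₀" => network16 (bondLeft restrictWindow) (bondRight extendWindow)

theorem network16_window_tmul (k : Fin 5) (l : Fin 3) :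
    N₀ (e₅ k ⊗ₜ e₃ l) =
      restrictWindow 0 (e₅ k) ⊗ₜ extendWindow 0 (e₃ l) +
        restrictWindow 1 (e₅ k) ⊗ₜ extendWindow 1 (e₃ l) := by
  simp [network16_eq_contractBond, contractBond_bondLeft_bondRight, Fin.sum_univ_two]

def windowPreimage : Fin 3 → Fin 5 → (Fin 5 → ℂ) ⊗[ℂ] (Fin 3 → ℂ) :=
  let t : Fin 5 → Fin 3 → (Fin 5 → ℂ) ⊗[ℂ] (Fin 3 → ℂ) := fun k l => e₅ k ⊗ₜ e₃ l
  ![![t 0 0, t 0 1, t 0 2, 0, t 2 2 - t 4 0],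
    ![t 1 0, t 1 1, t 1 2, t 3 1, t 3 2],
    ![t 2 0 - t 0 2, t 2 1, t 4 0, t 4 1, t 4 2]]

theorem tmul_sub_network16_windowPreimage_mem (a : Fin 3) (m : Fin 5) :
    e₃ a ⊗ₜ e₅ m - N₀ (windowPreimage a m) ∈ ℂ ∙ (e₃ 0 ⊗ₜ[ℂ] e₅ 3) := by
  fin_cases a <;> fin_cases m <;>
    simp [windowPreimage, network16_window_tmul, restrictWindow_basisFun, extendWindow_basisFun,
      -Pi.basisFun_apply]

theorem le_finrank_range_network16_window :
    14 ≤ finrank ℂ (range N₀) := by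
  have hspan : range N₀ ⊔ (ℂ ∙ (e₃ 0 ⊗ₜ[ℂ] e₅ 3)) = ⊤ := by
    rw [eq_top_iff, ← (Basis.tensorProduct e₃ e₅).span_eq, Submodule.span_le]
    rintro _ ⟨⟨a, m⟩, rfl⟩
    have := Submodule.add_mem_sup (mem_range_self N₀ (windowPreimage a m))
      (tmul_sub_network16_windowPreimage_mem a m)
    rw [add_sub_cancel] at this
    rwa [SetLike.mem_coe, Basis.tensorProduct_apply]
  have hsup := Submodule.finrank_add_le_finrank_add_finrank (range N₀) (ℂ ∙ (e₃ 0 ⊗ₜ[ℂ] e₅ 3))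
  have hline : finrank ℂ (ℂ ∙ (e₃ 0 ⊗ₜ[ℂ] e₅ 3)) ≤ 1 :=
    (finrank_span_le_card _).trans (by simp)
  rw [hspan, finrank_top, finrank_tensorProduct] at hsup
  simp only [finrank_fin_fun] at hsup
  omega

end Example

/-- For every choice of `T₁ : ℂ⁵ → ℂ³ ⊗ ℂ²` and `T₂ : ℂ² ⊗ ℂ³ → ℂ⁵`, the map
`(Id ⊗ T₂) ∘ (T₁ ⊗ Id)` has rank at most 14, and rank 14 is achieved; so the quantum
max-flow of this network is 14, strictly below the quantum min-cut 15. -/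
theorem stmt_16 :
    (∀ (T₁ : (Fin 5 → ℂ) →ₗ[ℂ] (Fin 3 → ℂ) ⊗[ℂ] (Fin 2 → ℂ))
        (T₂ : (Fin 2 → ℂ) ⊗[ℂ] (Fin 3 → ℂ) →ₗ[ℂ] (Fin 5 → ℂ)),
      Module.finrank ℂ ↥(LinearMap.range (network16 T₁ T₂)) ≤ 14) ∧
    (∃ (T₁ : (Fin 5 → ℂ) →ₗ[ℂ] (Fin 3 → ℂ) ⊗[ℂ] (Fin 2 → ℂ))
        (T₂ : (Fin 2 → ℂ) ⊗[ℂ] (Fin 3 → ℂ) →ₗ[ℂ] (Fin 5 → ℂ)),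
      Module.finrank ℂ ↥(LinearMap.range (network16 T₁ T₂)) = 14) :=
  ⟨finrank_range_network16_le, bondLeft restrictWindow, bondRight extendWindow,
    (finrank_range_network16_le _ _).antisymm le_finrank_range_network16_window⟩

end
end

section
/- Let T : ℂ²⊗ℂ²⊗ℂ² → ℂ be the tensor with T(e_i⊗e_j⊗e_k) = 1 if i=j=k and 0 otherwise ('copy tensor' S), and let D be any 2×2 complex matrix. Define Φ : ℂ²⊗ℂ² → ℂ²⊗ℂ² by Φ|i,j⟩ = Σ_{k,l} F(i,j;k,l)|k,l⟩ where F(i,j;k,l) = D_{ik} D_{kj} D_{jl} D_{li} (indices in {0,1}). Then F(i,j;k,l) = F(j,i;k,l) for all i,j,k,l; in particular Φ|0,1⟩ = Φ|1,0⟩ and rank(Φ) ≤ 3. -/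
/-! When `i ≠ j`, every index in `Fin 2` is `i` or `j`, and in each of the four resulting cases
swapping `i` and `j` only permutes the factors of `D i k * D k j * D j l * D l i`. Hence the
columns `(0, 1)` and `(1, 0)` of `Φ` coincide, so its four columns span at most three dimensions. -/

theorem mul_cycle_swap_of_mem {ι R : Type*} [CommSemigroup R] (D : ι → ι → R) {i j k l : ι}
    (hk : k = i ∨ k = j) (hl : l = i ∨ l = j) :
    D i k * D k j * D j l * D l i = D j k * D k i * D i l * D l j := by
  rcases hk with rfl | rfl <;> rcases hl with rfl | rfl <;> ac_rfl

theorem Fin.two_eq_or_eq {i j : Fin 2} (hij : i ≠ j) (k : Fin 2) : k = i ∨ k = j := by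
  omega

theorem Matrix.rank_le_card_sub_one_of_col_eq {m n R : Type*} [Fintype m] [Fintype n]
    [CommRing R] [StrongRankCondition R] (A : Matrix m n R) {a b : n} (hab : a ≠ b)
    (h : A.col a = A.col b) : A.rank ≤ Fintype.card n - 1 := by
  classical
  have hrange : Set.range A.col = ((Finset.univ.erase a).image A.col : Set (m → R)) := by
    ext v
    simp only [Set.mem_range, Finset.coe_image, Finset.coe_erase, Finset.coe_univ, Set.mem_image,
      Set.mem_sdiff, Set.mem_univ, Set.mem_singleton_iff, true_and]
    constructor
    · rintro ⟨c, rfl⟩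
      by_cases hc : c = a
      · exact ⟨b, hab.symm, by rw [hc, h]⟩
      · exact ⟨c, hc, rfl⟩
    · rintro ⟨c, -, rfl⟩
      exact ⟨c, rfl⟩
  calc A.rank = Module.finrank R (Submodule.span R (Set.range A.col)) := A.rank_eq_finrank_span_cols
    _ ≤ ((Finset.univ.erase a).image A.col).card := hrange ▸ finrank_span_finset_le_card _
    _ ≤ (Finset.univ.erase a).card := Finset.card_image_le
    _ = Fintype.card n - 1 := Finset.card_erase_of_mem (Finset.mem_univ a)

/-- Contracting four copy tensors in a square with matrix `D` on internal edges gives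
`F(i,j;k,l) = D_{ik} D_{kj} D_{jl} D_{li}`, which is symmetric in `(i,j)`; hence the
resulting map `Φ` satisfies `Φ|01⟩ = Φ|10⟩` and has rank at most 3. -/
theorem stmt_17 (D : Matrix (Fin 2) (Fin 2) ℂ)
    (F : Fin 2 → Fin 2 → Fin 2 → Fin 2 → ℂ)
    (hF : ∀ i j k l, F i j k l = D i k * D k j * D j l * D l i)
    (Φ : Matrix (Fin 2 × Fin 2) (Fin 2 × Fin 2) ℂ)
    (hΦ : ∀ kl ij, Φ kl ij = F ij.1 ij.2 kl.1 kl.2) :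
    (∀ i j k l, F i j k l = F j i k l) ∧
      (∀ kl : Fin 2 × Fin 2, Φ kl (0, 1) = Φ kl (1, 0)) ∧
      Φ.rank ≤ 3 := by
  have hF_swap : ∀ i j k l, F i j k l = F j i k l := by
    intro i j k l
    rw [hF, hF]
    obtain rfl | hij := eq_or_ne i j
    · rfl
    · exact mul_cycle_swap_of_mem D (Fin.two_eq_or_eq hij k) (Fin.two_eq_or_eq hij l)
  have hΦ_col : ∀ kl : Fin 2 × Fin 2, Φ kl (0, 1) = Φ kl (1, 0) := fun kl => by
    rw [hΦ, hΦ]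
    exact hF_swap 0 1 kl.1 kl.2
  refine ⟨hF_swap, hΦ_col, ?_⟩
  simpa using Φ.rank_le_card_sub_one_of_col_eq (a := (0, 1)) (b := (1, 0)) (by decide)
    (funext hΦ_col)
end

section
/- Let G be a finite undirected graph with degree-1 open ends partitioned into sources S and sinks T. Then the maximum number of pairwise edge-disjoint paths from S to T equals the minimum cardinality of an edge cut set separating S from T (undirected Menger's theorem). -/
/-!
Replace every edge by two opposite darts of capacity one and work with integral skew-symmetric
flows `g : V → V → ℤ`, conserved off `S ∪ T`. Each path of a family of edge-disjoint `S`–`T`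
paths crosses a given edge cut, in an edge of its own, so there are at most as many paths as cut
edges. Conversely, take a flow of maximal value. It admits no augmenting path, so the set of
vertices reachable from `S` along residual darts (darts `(x, y)` with `g x y ≤ 0`) contains `S`,
misses `T`, and every edge leaving it carries one unit of flow outwards: these edges form a cut
whose size is the flow value. Finally, a flow of value `k` splits into `k` edge-disjoint paths:
follow darts carrying flow from a source with positive excess until a sink is reached, remove
that path from the flow, and repeat.
-/

open Finset SimpleGraph

namespace SimpleGraph.Walk

variable {V : Type*} [DecidableEq V] {G : SimpleGraph V}

def dartCount {a b : V} (W : G.Walk a b) (x y : V) : ℕ :=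
  (W.darts.map Dart.toProd).count (x, y)

@[simp]
lemma dartCount_nil {a x y : V} : dartCount (Walk.nil : G.Walk a a) x y = 0 := by
  simp [dartCount]

lemma dartCount_cons {a c b : V} (h : G.Adj a c) (W : G.Walk c b) (x y : V) :
    dartCount (Walk.cons h W) x y = dartCount W x y + if x = a ∧ y = c then 1 else 0 := by
  simp only [dartCount, Walk.darts_cons, List.map_cons, List.count_cons, beq_iff_eq,
    Prod.ext_iff]
  exact congrArg _ (if_congr (and_congr eq_comm eq_comm) rfl rfl)

lemma dartCount_pos_iff {a b x y : V} {W : G.Walk a b} :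
    0 < dartCount W x y ↔ ∃ d ∈ W.darts, d.toProd = (x, y) := by
  simp [dartCount, List.count_pos_iff]

lemma dartCount_eq_zero_of_notMem_edges {a b x y : V} {W : G.Walk a b}
    (h : s(x, y) ∉ W.edges) : dartCount W x y = 0 := by
  by_contra hne
  obtain ⟨d, hd, hxy⟩ := dartCount_pos_iff.1 (Nat.pos_of_ne_zero hne)
  exact h (List.mem_map.2 ⟨d, hd, dart_edge_eq_mk'_iff.2 (Or.inl hxy)⟩)

lemma IsTrail.dartCount_add_le_one {a b : V} {W : G.Walk a b} (hW : W.IsTrail) (x y : V) :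
    dartCount W x y + dartCount W y x ≤ 1 := by
  induction W with
  | nil => simp
  | @cons a c b h W ih =>
    rw [Walk.isTrail_cons] at hW
    simp only [dartCount_cons]
    by_cases hxy : s(x, y) = s(a, c)
    · rw [dartCount_eq_zero_of_notMem_edges (hxy ▸ hW.2),
        dartCount_eq_zero_of_notMem_edges (Sym2.eq_swap ▸ hxy ▸ hW.2)]
      have := h.ne
      split_ifs <;> simp_all
    · have := ih hW.1
      split_ifs <;> simp_all

lemma IsTrail.dartCount_of_mem {a b : V} {W : G.Walk a b} (hW : W.IsTrail) {d : G.Dart}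
    (hd : d ∈ W.darts) : dartCount W d.fst d.snd = 1 ∧ dartCount W d.snd d.fst = 0 := by
  have hpos : 0 < dartCount W d.fst d.snd := dartCount_pos_iff.2 ⟨d, hd, rfl⟩
  have := hW.dartCount_add_le_one d.fst d.snd
  omega

lemma sum_dartCount_sub [Fintype V] {a b : V} (W : G.Walk a b) (v : V) :
    ∑ u, ((dartCount W v u : ℤ) - dartCount W u v) =
      (if v = a then 1 else 0) - if v = b then 1 else 0 := by
  induction W with
  | nil => simp
  | @cons a c b h W ih =>
    rw [sum_sub_distrib] at ih
    simp only [dartCount_cons, Nat.cast_add, Nat.cast_ite, Nat.cast_one, Nat.cast_zero,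
      sum_sub_distrib, sum_add_distrib, ite_and, sum_ite_irrel, sum_ite_eq', sum_const_zero,
      mem_univ, if_true]
    linarith

end SimpleGraph.Walk

namespace Menger

variable {V : Type*}

section Graph

variable (G : SimpleGraph V) (S T : Set V)

def IsEdgeCut (C : Finset (Sym2 V)) : Prop :=
  ∃ f : V → Bool, (∀ s ∈ S, f s = false) ∧ (∀ t ∈ T, f t = true) ∧
    ∀ e, e ∈ C ↔ e ∈ G.edgeSet ∧ ∃ a b, e = s(a, b) ∧ f a ≠ f b

def IsEdgeDisjointPaths {m : ℕ} (p : Fin m → Σ a b : V, G.Walk a b) : Prop :=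
  (∀ i, (p i).2.2.IsPath ∧ (p i).1 ∈ S ∧ (p i).2.1 ∈ T) ∧
    ∀ i i', i ≠ i' → ∀ e, e ∈ (p i).2.2.edges → e ∉ (p i').2.2.edges

variable {G S T}

lemma IsEdgeDisjointPaths.le_card {m : ℕ} {p : Fin m → Σ a b : V, G.Walk a b}
    (hp : IsEdgeDisjointPaths G S T p) {C : Finset (Sym2 V)} (hC : IsEdgeCut G S T C) :
    m ≤ C.card := by
  obtain ⟨f, hfS, hfT, hC⟩ := hC
  have hcross : ∀ i, ∃ e ∈ (p i).2.2.edges, e ∈ C := by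
    intro i
    obtain ⟨-, hs, ht⟩ := hp.1 i
    obtain ⟨d, hd, hfst, hsnd⟩ :=
      (p i).2.2.exists_boundary_dart {v | f v = false} (hfS _ hs) (by simp [hfT _ ht])
    refine ⟨d.edge, List.mem_map_of_mem hd, (hC _).2 ⟨d.edge_mem, d.fst, d.snd, rfl, ?_⟩⟩
    simp_all
  choose φ hφp hφC using hcross
  simpa using card_le_card_of_injOn (s := univ) φ (fun i _ => hφC i) fun i _ j _ hij =>
    by_contra fun hne => hp.2 i j hne _ (hφp i) (hij ▸ hφp j)

lemma IsEdgeDisjointPaths.cons {m : ℕ} {p : Fin m → Σ a b : V, G.Walk a b}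
    (hp : IsEdgeDisjointPaths G S T p) {s t : V} {W : G.Walk s t} (hW : W.IsPath) (hs : s ∈ S)
    (ht : t ∈ T) (hWp : ∀ i, ∀ e ∈ (p i).2.2.edges, e ∉ W.edges) :
    IsEdgeDisjointPaths G S T (Fin.cons ⟨s, t, W⟩ p) := by
  refine ⟨fun i => ?_, fun i i' hii' e => ?_⟩
  · cases i using Fin.cases
    exacts [⟨hW, hs, ht⟩, hp.1 _]
  · cases i using Fin.cases <;> cases i' using Fin.cases
    · exact absurd rfl hii'
    · exact fun he hpe => hWp _ e hpe he
    · exact hWp _ e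
    · exact hp.2 _ _ (fun h => hii' (congrArg Fin.succ h)) e

lemma exists_isPath_of_reflTransGen [DecidableEq V] {r : V → V → Prop}
    (hr : ∀ x y, r x y → G.Adj x y) {s t : V} (h : Relation.ReflTransGen r s t) :
    ∃ W : G.Walk s t, W.IsPath ∧ ∀ d ∈ W.darts, r d.fst d.snd := by
  have hwalk : ∃ W : G.Walk s t, ∀ d ∈ W.darts, r d.fst d.snd := by
    induction h using Relation.ReflTransGen.head_induction_on with
    | refl => exact ⟨Walk.nil, by simp⟩
    | head hxy _ ih =>
      obtain ⟨W, hW⟩ := ih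
      refine ⟨Walk.cons (hr _ _ hxy) W, fun d hd => ?_⟩
      rcases List.mem_cons.1 hd with rfl | hd
      exacts [hxy, hW d hd]
  obtain ⟨W, hW⟩ := hwalk
  exact ⟨W.bypass, W.bypass_isPath, fun d hd => hW d (W.darts_bypass_subset_darts hd)⟩

lemma exists_isEdgeCut_card_eq [Fintype V] [DecidableEq V] [DecidableRel G.Adj] (A : Finset V)
    (hS : ∀ s ∈ S, s ∈ A) (hT : ∀ t ∈ T, t ∉ A) :
    ∃ C, IsEdgeCut G S T C ∧ C.card = #{p ∈ A ×ˢ Aᶜ | G.Adj p.1 p.2} := by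
  refine ⟨{p ∈ A ×ˢ Aᶜ | G.Adj p.1 p.2}.image fun p => s(p.1, p.2),
    ⟨fun v => decide (v ∉ A), by simpa using hS, by simpa using hT, fun e => ?_⟩,
    card_image_of_injOn ?_⟩
  · constructor
    · simp only [mem_image, mem_filter, mem_product, mem_compl]
      rintro ⟨⟨a, b⟩, ⟨⟨ha, hb⟩, hab⟩, rfl⟩
      exact ⟨hab, a, b, rfl, by simp [ha, hb]⟩
    · rintro ⟨he, a, b, rfl, hab⟩
      simp only [mem_image, mem_filter, mem_product, mem_compl]
      by_cases ha : a ∈ A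
      · exact ⟨(a, b), ⟨⟨ha, by simpa [ha] using hab⟩, he⟩, rfl⟩
      · exact ⟨(b, a), ⟨⟨by simpa [ha] using hab, ha⟩, G.adj_symm he⟩, Sym2.eq_swap⟩
  · rintro ⟨a, b⟩ hab ⟨c, d⟩ hcd h
    simp only [coe_filter, mem_product, mem_compl] at hab hcd
    rcases Sym2.eq_iff.1 h with ⟨rfl, rfl⟩ | ⟨rfl, rfl⟩
    · rfl
    · exact absurd hab.1.1 hcd.1.2

lemma ne_zero_of_mem_edges {g : V → V → ℤ} (hg : ∀ x y, g y x = -g x y) {a b : V}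
    {W : G.Walk a b} (hW1 : ∀ d ∈ W.darts, g d.fst d.snd = 1) {x y : V} (he : s(x, y) ∈ W.edges) :
    g x y ≠ 0 := by
  obtain ⟨d, hd, hde⟩ := List.mem_map.1 he
  rcases dart_edge_eq_mk'_iff.1 hde with hxy | hxy <;> obtain ⟨rfl, rfl⟩ := Prod.ext_iff.1 hxy
  · simp [hW1 d hd]
  · simp [hg d.fst d.snd, hW1 d hd]

end Graph

section Augment

variable [DecidableEq V] {G : SimpleGraph V} {g : V → V → ℤ} {a b : V}

def augment (g : V → V → ℤ) (W : G.Walk a b) (σ : ℤ) : V → V → ℤ :=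
  fun x y => g x y + σ * ((W.dartCount x y : ℤ) - W.dartCount y x)

variable {W : G.Walk a b}

lemma augment_skew (hg : ∀ x y, g y x = -g x y) (σ : ℤ) (x y : V) :
    augment g W σ y x = -augment g W σ x y := by
  simp only [augment, hg x y]
  ring

lemma augment_one_le [DecidableRel G.Adj] (hg : ∀ x y, g x y ≤ if G.Adj x y then 1 else 0)
    (hW : W.IsTrail) (hres : ∀ d ∈ W.darts, g d.fst d.snd ≤ 0) (x y : V) :
    augment g W 1 x y ≤ if G.Adj x y then 1 else 0 := by
  rcases Nat.eq_zero_or_pos (W.dartCount x y) with h0 | hpos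
  · simp only [augment, h0, Nat.cast_zero, zero_sub, one_mul]
    linarith [hg x y, Int.natCast_nonneg (W.dartCount y x)]
  · obtain ⟨d, hd, hxy⟩ := Walk.dartCount_pos_iff.1 hpos
    obtain ⟨rfl, rfl⟩ := Prod.ext_iff.1 hxy
    obtain ⟨h1, h0⟩ := hW.dartCount_of_mem hd
    simp only [augment, h1, h0, if_pos d.adj, Nat.cast_one, Nat.cast_zero, sub_zero, one_mul]
    linarith [hres d hd]

lemma augment_neg_one_eq (hg : ∀ x y, g y x = -g x y) (hW : W.IsTrail)
    (hW1 : ∀ d ∈ W.darts, g d.fst d.snd = 1) (x y : V) :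
    augment g W (-1) x y = if s(x, y) ∈ W.edges then 0 else g x y := by
  split_ifs with he
  · obtain ⟨d, hd, hde⟩ := List.mem_map.1 he
    obtain ⟨h1, h0⟩ := hW.dartCount_of_mem hd
    rcases dart_edge_eq_mk'_iff.1 hde with hxy | hxy <;> obtain ⟨rfl, rfl⟩ := Prod.ext_iff.1 hxy
    · simp only [augment, h1, h0, hW1 d hd]
      norm_num
    · simp only [augment, h1, h0, hg d.fst d.snd, hW1 d hd]
      norm_num
  · have hxy := Walk.dartCount_eq_zero_of_notMem_edges he
    have hyx := Walk.dartCount_eq_zero_of_notMem_edges (Sym2.eq_swap ▸ he)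
    simp [augment, hxy, hyx]

end Augment

variable [Fintype V]

def out (g : V → V → ℤ) (v : V) : ℤ := ∑ u, g v u

structure IsUnitFlow (G : SimpleGraph V) [DecidableRel G.Adj] (S T : Set V) (g : V → V → ℤ) :
    Prop where
  skew : ∀ x y, g y x = -g x y
  le_adj : ∀ x y, g x y ≤ if G.Adj x y then 1 else 0
  out_nonneg : ∀ v ∈ S, 0 ≤ out g v
  out_eq_zero : ∀ v, v ∉ S → v ∉ T → out g v = 0

def flowValue (S : Set V) [DecidablePred (· ∈ S)] (g : V → V → ℤ) : ℤ :=
  ∑ v ∈ S.toFinset, out g v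

section

variable [DecidableEq V] {G : SimpleGraph V} {g : V → V → ℤ} {a b : V}

lemma sum_out_eq_sum_sum_compl (hg : ∀ x y, g y x = -g x y) (A : Finset V) :
    ∑ v ∈ A, out g v = ∑ v ∈ A, ∑ u ∈ Aᶜ, g v u := by
  have hinner : ∑ v ∈ A, ∑ u ∈ A, g v u = 0 := by
    have h : ∑ v ∈ A, ∑ u ∈ A, g v u = ∑ v ∈ A, ∑ u ∈ A, -g v u := by
      rw [sum_comm]
      exact sum_congr rfl fun y _ => sum_congr rfl fun x _ => hg y x
    simp only [sum_neg_distrib] at h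
    linarith
  simp only [out, ← sum_add_sum_compl A, sum_add_distrib, hinner, zero_add]

lemma out_augment (W : G.Walk a b) (σ : ℤ) (v : V) :
    out (augment g W σ) v = out g v + σ * ((if v = a then 1 else 0) - if v = b then 1 else 0) := by
  simp only [out, augment, sum_add_distrib, ← mul_sum, Walk.sum_dartCount_sub]

lemma flowValue_augment {S : Set V} [DecidablePred (· ∈ S)] (W : G.Walk a b) (σ : ℤ) (ha : a ∈ S)
    (hb : b ∉ S) :
    flowValue S (augment g W σ) = flowValue S g + σ := by
  simp only [flowValue, out_augment, sum_add_distrib, ← mul_sum, sum_sub_distrib,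
    sum_ite_eq', Set.mem_toFinset, if_pos ha, if_neg hb]
  ring

end

variable {G : SimpleGraph V} [DecidableRel G.Adj] {S T : Set V} {g : V → V → ℤ}

namespace IsUnitFlow

lemma le_one (hg : IsUnitFlow G S T g) (x y : V) : g x y ≤ 1 :=
  (hg.le_adj x y).trans (by split_ifs <;> norm_num)

lemma adj_of_eq_one (hg : IsUnitFlow G S T g) {x y : V} (h : g x y = 1) : G.Adj x y := by
  by_contra hn
  have := hg.le_adj x y
  rw [if_neg hn] at this
  omega

lemma eq_zero_of_not_adj (hg : IsUnitFlow G S T g) {x y : V} (h : ¬G.Adj x y) : g x y = 0 := by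
  have hxy := hg.le_adj x y
  have hyx := hg.le_adj y x
  rw [if_neg h] at hxy
  rw [if_neg (fun h' => h h'.symm), hg.skew] at hyx
  omega

lemma out_nonneg_of_notMem (hg : IsUnitFlow G S T g) {v : V} (hv : v ∉ T) : 0 ≤ out g v := by
  by_cases hvS : v ∈ S
  · exact hg.out_nonneg v hvS
  · exact (hg.out_eq_zero v hvS hv).ge

end IsUnitFlow

variable (G S T) in
lemma exists_isUnitFlow_forall_le [DecidablePred (· ∈ S)] :
    ∃ g, IsUnitFlow G S T g ∧ ∀ g', IsUnitFlow G S T g' → flowValue S g' ≤ flowValue S g := by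
  have hzero : IsUnitFlow G S T fun _ _ => 0 :=
    ⟨fun _ _ => neg_zero.symm, fun _ _ => by split_ifs <;> norm_num, fun _ _ => by simp [out],
      fun _ _ _ => by simp [out]⟩
  have hbdd : ∀ g, IsUnitFlow G S T g → flowValue S g ≤ ∑ _v ∈ S.toFinset, ∑ _u : V, 1 :=
    fun g hg => sum_le_sum fun v _ => sum_le_sum fun u _ => hg.le_one v u
  obtain ⟨_, ⟨g, hg, rfl⟩, hmax⟩ := Int.exists_greatest_of_bdd
    (P := fun z => ∃ g, IsUnitFlow G S T g ∧ flowValue S g = z)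
    ⟨_, fun _ ⟨g, hg, hz⟩ => hz ▸ hbdd g hg⟩ ⟨_, _, hzero, rfl⟩
  exact ⟨g, hg, fun g' hg' => hmax _ ⟨g', hg', rfl⟩⟩

variable [DecidableEq V]

namespace IsUnitFlow

lemma augment_of_le (hg : IsUnitFlow G S T g) {s t : V} (hST : Disjoint S T) (hs : s ∈ S)
    (ht : t ∈ T) (W : G.Walk s t) {σ : ℤ}
    (hcap : ∀ x y, augment g W σ x y ≤ if G.Adj x y then 1 else 0) (hσ : 0 ≤ out g s + σ) :
    IsUnitFlow G S T (augment g W σ) := by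
  have htS : t ∉ S := hST.notMem_of_mem_right ht
  refine ⟨augment_skew hg.skew σ, hcap, fun v hv => ?_, fun v hvS hvT => ?_⟩
  · rw [out_augment, if_neg (fun h : v = t => htS (h ▸ hv))]
    by_cases hvs : v = s
    · subst hvs; simpa using hσ
    · simpa [hvs] using hg.out_nonneg v hv
  · rw [out_augment, if_neg (fun h : v = s => hvS (h ▸ hs)),
      if_neg (fun h : v = t => hvT (h ▸ ht)), hg.out_eq_zero v hvS hvT]
    ring

lemma augment_one (hg : IsUnitFlow G S T g) {s t : V} (hST : Disjoint S T) (hs : s ∈ S)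
    (ht : t ∈ T) {W : G.Walk s t} (hW : W.IsTrail) (hres : ∀ d ∈ W.darts, g d.fst d.snd ≤ 0) :
    IsUnitFlow G S T (augment g W 1) :=
  hg.augment_of_le hST hs ht W (augment_one_le hg.le_adj hW hres)
    (by linarith [hg.out_nonneg s hs])

lemma augment_neg_one (hg : IsUnitFlow G S T g) {s t : V} (hST : Disjoint S T) (hs : s ∈ S)
    (ht : t ∈ T) {W : G.Walk s t} (hW : W.IsTrail) (hW1 : ∀ d ∈ W.darts, g d.fst d.snd = 1)
    (hpos : 0 < out g s) : IsUnitFlow G S T (augment g W (-1)) := by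
  refine hg.augment_of_le hST hs ht W (fun x y => ?_) (by linarith)
  rw [augment_neg_one_eq hg.skew hW hW1]
  by_cases he : s(x, y) ∈ W.edges
  · rw [if_pos he]
    split_ifs <;> norm_num
  · rw [if_neg he]
    exact hg.le_adj x y

/-- If no sink were reachable from `s` along darts carrying flow, no flow would leave the set of
reachable vertices, which contradicts the positive excess at `s`. -/
lemma exists_path_to_sink (hg : IsUnitFlow G S T g) {s : V} (hs : 0 < out g s) :
    ∃ t ∈ T, ∃ W : G.Walk s t, W.IsPath ∧ ∀ d ∈ W.darts, g d.fst d.snd = 1 := by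
  classical
  suffices ∃ t ∈ T, Relation.ReflTransGen (fun x y => g x y = 1) s t by
    obtain ⟨t, ht, hst⟩ := this
    exact ⟨t, ht, exists_isPath_of_reflTransGen (fun _ _ => hg.adj_of_eq_one) hst⟩
  by_contra! hA
  set A := univ.filter (Relation.ReflTransGen (fun x y => g x y = 1) s)
  have hsA : s ∈ A := mem_filter.2 ⟨mem_univ s, .refl⟩
  have hpos : 0 < ∑ v ∈ A, out g v :=
    hs.trans_le (single_le_sum (fun v hv => hg.out_nonneg_of_notMem
      fun hvT => hA v hvT (mem_filter.1 hv).2) hsA)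
  have hnonpos : ∑ v ∈ A, ∑ u ∈ Aᶜ, g v u ≤ 0 := by
    refine sum_nonpos fun v hv => sum_nonpos fun u hu => ?_
    have hne : g v u ≠ 1 := fun h =>
      mem_compl.1 hu (mem_filter.2 ⟨mem_univ u, (mem_filter.1 hv).2.tail h⟩)
    have := hg.le_one v u
    omega
  rw [sum_out_eq_sum_sum_compl hg.skew] at hpos
  linarith

lemma not_reflTransGen_of_forall_le [DecidablePred (· ∈ S)] (hg : IsUnitFlow G S T g)
    (hST : Disjoint S T)
    (hmax : ∀ g', IsUnitFlow G S T g' → flowValue S g' ≤ flowValue S g) {s t : V} (hs : s ∈ S)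
    (ht : t ∈ T) : ¬Relation.ReflTransGen (fun x y => G.Adj x y ∧ g x y ≤ 0) s t := by
  intro hst
  obtain ⟨W, hW, hres⟩ := exists_isPath_of_reflTransGen (fun _ _ h => h.1) hst
  have hmore := hmax _ (hg.augment_one hST hs ht hW.isTrail fun d hd => (hres d hd).2)
  rw [flowValue_augment W 1 hs (hST.notMem_of_mem_right ht)] at hmore
  linarith

lemma exists_isEdgeCut_card_eq_flowValue [DecidablePred (· ∈ S)] (hg : IsUnitFlow G S T g)
    (hno : ∀ s ∈ S, ∀ t ∈ T, ¬Relation.ReflTransGen (fun x y => G.Adj x y ∧ g x y ≤ 0) s t) :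
    ∃ C, IsEdgeCut G S T C ∧ (C.card : ℤ) = flowValue S g := by
  classical
  set A := univ.filter fun v =>
    ∃ s ∈ S, Relation.ReflTransGen (fun x y => G.Adj x y ∧ g x y ≤ 0) s v
  have hAT : ∀ t ∈ T, t ∉ A := fun t ht htA => by
    obtain ⟨s, hs, hst⟩ := (mem_filter.1 htA).2
    exact hno s hs t ht hst
  obtain ⟨C, hC, hcard⟩ := exists_isEdgeCut_card_eq (G := G) A
    (fun s hs => mem_filter.2 ⟨mem_univ s, s, hs, .refl⟩) hAT
  refine ⟨C, hC, ?_⟩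
  have hsat : ∀ p ∈ A ×ˢ Aᶜ, g p.1 p.2 = if G.Adj p.1 p.2 then 1 else 0 := by
    rintro ⟨v, u⟩ hvu
    obtain ⟨hv, hu⟩ := mem_product.1 hvu
    dsimp only
    split_ifs with hadj
    · have hpos : ¬g v u ≤ 0 := fun hle => by
        obtain ⟨s, hs, hsv⟩ := (mem_filter.1 hv).2
        exact mem_compl.1 hu (mem_filter.2 ⟨mem_univ u, s, hs, hsv.tail ⟨hadj, hle⟩⟩)
      have := hg.le_one v u
      omega
    · exact hg.eq_zero_of_not_adj hadj
  calc (C.card : ℤ) = ∑ p ∈ A ×ˢ Aᶜ, if G.Adj p.1 p.2 then 1 else 0 := by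
        rw [hcard, natCast_card_filter]
    _ = ∑ v ∈ A, out g v := by
        rw [← sum_congr rfl hsat, sum_product, sum_out_eq_sum_sum_compl hg.skew]
    _ = flowValue S g := by
        refine (sum_subset (fun v hv => ?_) fun v hvA hvS => ?_).symm
        · exact mem_filter.2 ⟨mem_univ v, v, Set.mem_toFinset.1 hv, .refl⟩
        · exact hg.out_eq_zero v (fun h => hvS (Set.mem_toFinset.2 h)) fun hvT => hAT v hvT hvA

lemma exists_isEdgeDisjointPaths [DecidablePred (· ∈ S)] (hST : Disjoint S T) (k : ℕ) :
    ∀ {g : V → V → ℤ}, IsUnitFlow G S T g → (k : ℤ) ≤ flowValue S g →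
      ∃ p : Fin k → Σ a b : V, G.Walk a b, IsEdgeDisjointPaths G S T p ∧
        ∀ i x y, s(x, y) ∈ (p i).2.2.edges → g x y ≠ 0 := by
  induction k with
  | zero => exact fun _ _ => ⟨Fin.elim0, ⟨fun i => i.elim0, fun i => i.elim0⟩, fun i => i.elim0⟩
  | succ k ih =>
    intro g hg hk
    obtain ⟨s, hs, hpos⟩ := exists_lt_of_sum_lt (s := S.toFinset) (f := fun _ => (0 : ℤ))
      (g := out g) (by rw [sum_const_zero]; exact lt_of_lt_of_le (by positivity) hk)
    rw [Set.mem_toFinset] at hs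
    obtain ⟨t, ht, W, hW, hW1⟩ := hg.exists_path_to_sink hpos
    have hrem := augment_neg_one_eq hg.skew hW.isTrail hW1
    obtain ⟨p, hp, hsupp⟩ := ih (hg.augment_neg_one hST hs ht hW.isTrail hW1 hpos) (by
      rw [flowValue_augment W _ hs (hST.notMem_of_mem_right ht)]
      push_cast at hk
      linarith)
    have hpW : ∀ i x y, s(x, y) ∈ (p i).2.2.edges → s(x, y) ∉ W.edges ∧ g x y ≠ 0 := by
      intro i x y he
      have := hsupp i x y he
      rw [hrem] at this
      split_ifs at this with hxy
      exacts [absurd rfl this, ⟨hxy, this⟩]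
    refine ⟨Fin.cons ⟨s, t, W⟩ p, hp.cons hW hs ht fun i e => ?_, fun i x y => ?_⟩
    · induction e using Sym2.ind with | h x y => exact fun he => (hpW i x y he).1
    · cases i using Fin.cases
      exacts [ne_zero_of_mem_edges hg.skew hW1, fun h => (hpW _ x y h).2]

end IsUnitFlow

lemma exists_isEdgeCut_isEdgeDisjointPaths (G : SimpleGraph V) [DecidableRel G.Adj]
    (hST : Disjoint S T) :
    ∃ C, IsEdgeCut G S T C ∧
      ∃ p : Fin C.card → Σ a b : V, G.Walk a b, IsEdgeDisjointPaths G S T p := by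
  classical
  obtain ⟨g, hg, hmax⟩ := exists_isUnitFlow_forall_le G S T
  obtain ⟨C, hC, hcard⟩ := hg.exists_isEdgeCut_card_eq_flowValue
    fun s hs t ht => hg.not_reflTransGen_of_forall_le hST hmax hs ht
  obtain ⟨p, hp, -⟩ := hg.exists_isEdgeDisjointPaths hST C.card hcard.le
  exact ⟨C, hC, p, hp⟩

end Menger

theorem stmt_18_general {V : Type*} [Fintype V] [DecidableEq V] (G : SimpleGraph V)
    [DecidableRel G.Adj] (S T : Set V) (hdisj : Disjoint S T) :
    sSup {m : ℕ | ∃ p : Fin m → Σ a : V, Σ b : V, G.Walk a b,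
        (∀ i, (p i).2.2.IsPath ∧ (p i).1 ∈ S ∧ (p i).2.1 ∈ T) ∧
        (∀ i i', i ≠ i' → ∀ e, e ∈ (p i).2.2.edges → e ∉ (p i').2.2.edges)} =
      sInf {m : ℕ | ∃ C : Finset (Sym2 V),
        (∃ f : V → Bool, (∀ s ∈ S, f s = false) ∧ (∀ t ∈ T, f t = true) ∧
          ∀ e, e ∈ C ↔ e ∈ G.edgeSet ∧ ∃ a b, e = s(a, b) ∧ f a ≠ f b) ∧
        m = C.card} := by
  obtain ⟨C, hC, p, hp⟩ := Menger.exists_isEdgeCut_isEdgeDisjointPaths G hdisj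
  have hmax : IsGreatest {m | ∃ p : Fin m → Σ a b : V, G.Walk a b,
      Menger.IsEdgeDisjointPaths G S T p} C.card :=
    ⟨⟨p, hp⟩, fun _ ⟨_, hq⟩ => hq.le_card hC⟩
  have hmin : IsLeast {m | ∃ C', Menger.IsEdgeCut G S T C' ∧ m = C'.card} C.card :=
    ⟨⟨C, hC, rfl⟩, fun _ ⟨_, hC', hm⟩ => hm ▸ hp.le_card hC'⟩
  exact hmax.csSup_eq.trans hmin.csInf_eq.symm

/-- Undirected Menger's theorem: in a finite undirected graph whose degree-1 vertices are
partitioned into sources `S` and sinks `T`, the maximum number of pairwise edge-disjoint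
paths from `S` to `T` equals the minimum cardinality of an edge cut set separating `S`
from `T`. -/
theorem stmt_18 {V : Type*} [Fintype V] [DecidableEq V] (G : SimpleGraph V)
    [DecidableRel G.Adj] (S T : Set V) (hdisj : Disjoint S T)
    (hdeg1 : ∀ v ∈ S ∪ T, G.degree v = 1) :
    sSup {m : ℕ | ∃ p : Fin m → Σ a : V, Σ b : V, G.Walk a b,
        (∀ i, (p i).2.2.IsPath ∧ (p i).1 ∈ S ∧ (p i).2.1 ∈ T) ∧
        (∀ i i', i ≠ i' → ∀ e, e ∈ (p i).2.2.edges → e ∉ (p i').2.2.edges)} =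
      sInf {m : ℕ | ∃ C : Finset (Sym2 V),
        (∃ f : V → Bool, (∀ s ∈ S, f s = false) ∧ (∀ t ∈ T, f t = true) ∧
          ∀ e, e ∈ C ↔ e ∈ G.edgeSet ∧ ∃ a b, e = s(a, b) ∧ f a ≠ f b) ∧
        m = C.card} :=
  stmt_18_general G S T hdisj
end

section
/- Fix a finite graph G with capacity function c and local ordering L, in the 'Version II' setting where all vertices of the same valence type must receive the same tensor. If 𝒯⁰ = {𝒯⁰_B} is a family of tensors indexed by valence types whose entries are algebraically independent over ℚ, then the tensor assignment v ↦ 𝒯⁰_{B_v} realizes the maximum rank: rank β(G,c,L;𝒯⁰) = QMF(G,c,L). -/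
open scoped Classical

/-- A tensor-network template: a finite undirected graph with edge set `E`, internal
vertices `V`, input open ends `S`, output open ends `T`, and a capacity on each edge.
Each edge has two ends (`ends e 0` and `ends e 1`), each attached either to an internal
vertex or to an open end; each open end is the end of exactly one edge. -/
structure TN where
  V : Type
  E : Type
  S : Type
  T : Type
  fV : Fintype V
  dV : DecidableEq V
  fE : Fintype E
  dE : DecidableEq E
  fS : Fintype S
  dS : DecidableEq S
  fT : Fintype T
  dT : DecidableEq T
  /-- The capacity (local Hilbert space dimension) of each edge. -/
  c : E → ℕ
  c_pos : ∀ e, 0 < c e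
  /-- The two ends of each edge attach to internal vertices or open ends. -/
  ends : E → Fin 2 → V ⊕ S ⊕ T
  /-- Each input open end is the end of exactly one edge. -/
  openS : ∀ u : S, ∃! p : E × Fin 2, ends p.1 p.2 = Sum.inr (Sum.inl u)
  /-- Each output open end is the end of exactly one edge. -/
  openT : ∀ u : T, ∃! p : E × Fin 2, ends p.1 p.2 = Sum.inr (Sum.inr u)

attribute [instance] TN.fV TN.dV TN.fE TN.dE TN.fS TN.dS TN.fT TN.dT

namespace TN

variable (N : TN)

/-- The edge-ends incident to an internal vertex `v`. -/
def Legs (v : N.V) : Type := {p : N.E × Fin 2 // N.ends p.1 p.2 = Sum.inl v}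

noncomputable instance (v : N.V) : Fintype (N.Legs v) := by unfold Legs; infer_instance

/-- A tensor assignment: a tensor at each internal vertex, i.e. a complex number for each
choice of an index on each incident edge-end. -/
def Assignment : Type :=
  (v : N.V) → (((p : N.Legs v) → Fin (N.c p.1.1)) → ℂ)

noncomputable instance : TopologicalSpace N.Assignment := by unfold Assignment; infer_instance

/-- The edge whose open end is the input `u`. -/
noncomputable def inEdge (u : N.S) : N.E := (N.openS u).choose.1

/-- The edge whose open end is the output `u`. -/
noncomputable def outEdge (u : N.T) : N.E := (N.openT u).choose.1

/-- Multi-indices on the input edges; a basis of the input space `V_S`. -/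
def InIdx : Type := (u : N.S) → Fin (N.c (N.inEdge u))

/-- Multi-indices on the output edges; a basis of the output space `V_T`. -/
def OutIdx : Type := (u : N.T) → Fin (N.c (N.outEdge u))

noncomputable instance : Fintype N.InIdx := by unfold InIdx; infer_instance
noncomputable instance : Fintype N.OutIdx := by unfold OutIdx; infer_instance
noncomputable instance : DecidableEq N.InIdx := by unfold InIdx; infer_instance
noncomputable instance : DecidableEq N.OutIdx := by unfold OutIdx; infer_instance

/-- The matrix of the linear map `β(G,c;𝒯) : V_S → V_T` obtained by contracting all
internal edges of the tensor network. -/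
noncomputable def β (𝒯 : N.Assignment) : Matrix N.OutIdx N.InIdx ℂ :=
  fun iT iS => ∑ W : (e : N.E) → Fin (N.c e),
    if (∀ u : N.S, W (N.inEdge u) = iS u) ∧ (∀ u : N.T, W (N.outEdge u) = iT u) then
      ∏ v : N.V, 𝒯 v (fun p => W p.1.1)
    else 0

/-- The quantum max-flow: the maximal rank of the contracted linear map over all
tensor assignments. -/
noncomputable def QMF : ℕ := sSup {r : ℕ | ∃ 𝒯 : N.Assignment, (N.β 𝒯).rank = r}

/-- `C` is an edge cut set: for some partition of vertices and open ends into an `S`-side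
and a `T`-side, `C` is exactly the set of edges crossing the partition. -/
def IsCutSet (C : Finset N.E) : Prop :=
  ∃ f : N.V ⊕ N.S ⊕ N.T → Bool,
    (∀ u : N.S, f (Sum.inr (Sum.inl u)) = false) ∧
    (∀ u : N.T, f (Sum.inr (Sum.inr u)) = true) ∧
    (∀ e : N.E, e ∈ C ↔ f (N.ends e 0) ≠ f (N.ends e 1))

/-- The quantum min-cut: the minimum over edge cut sets of the product of capacities. -/
noncomputable def QMC : ℕ :=
  sInf {m : ℕ | ∃ C : Finset N.E, N.IsCutSet C ∧ m = ∏ e ∈ C, N.c e}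

end TN

namespace TN

/-- A local ordering: for each internal vertex, a linear ordering of its incident
edge-ends. -/
def LocalOrdering (N : TN) : Type :=
  (v : N.V) → (Fin (Fintype.card (N.Legs v)) ≃ N.Legs v)

/-- The valence type of a vertex: its degree together with the sequence of capacities of
its incident edge-ends, listed in the local order. -/
noncomputable def valenceType (N : TN) (L : N.LocalOrdering) (v : N.V) :
    Σ d : ℕ, Fin d → ℕ :=
  ⟨Fintype.card (N.Legs v), fun i => N.c ((L v i).1.1)⟩

/-- A Version II tensor family: one tensor for each valence type. -/
def AssignmentII : Type :=
  (B : Σ d : ℕ, Fin d → ℕ) → ((i : Fin B.1) → Fin (B.2 i)) → ℂ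

/-- The matrix of the contracted linear map `β(G,c,L;𝒯)` in Version II, where each
vertex `v` is assigned the tensor `𝒯 (valenceType v)` according to the local ordering. -/
noncomputable def βII (N : TN) (L : N.LocalOrdering) (𝒯 : AssignmentII) :
    Matrix N.OutIdx N.InIdx ℂ :=
  fun iT iS => ∑ W : (e : N.E) → Fin (N.c e),
    if (∀ u : N.S, W (N.inEdge u) = iS u) ∧ (∀ u : N.T, W (N.outEdge u) = iT u) then
      ∏ v : N.V, 𝒯 (N.valenceType L v) (fun i => W ((L v i).1.1))
    else 0

/-- The Version II quantum max-flow: the maximal rank of `β(G,c,L;𝒯)` over all Version II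
tensor families. -/
noncomputable def QMFII (N : TN) (L : N.LocalOrdering) : ℕ :=
  sSup {r : ℕ | ∃ 𝒯 : AssignmentII, (N.βII L 𝒯).rank = r}

end TN

/-!
A nonzero `r × r` minor of `β(G,c,L;𝒯)` for some family `𝒯` is the evaluation at `𝒯` of the
corresponding minor of the generic matrix, whose entries are polynomials with rational
coefficients in the tensor entries. That polynomial is therefore nonzero, so it cannot vanish at
an algebraically independent family `𝒯₀`; hence `rank β(G,c,L;𝒯₀)` bounds every other rank.
-/

namespace Matrix

theorem exists_linearIndependent_row_submatrix {m n K : Type*} [Fintype m] [Fintype n] [Field K]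
    (M : Matrix m n K) : ∃ f : Fin M.rank → m, LinearIndependent K (M.submatrix f id).row := by
  rw [M.rank_eq_finrank_span_row]
  obtain ⟨r, hr, -, hli⟩ := Submodule.exists_fun_fin_finrank_span_eq K (Set.range M.row)
  choose f hf using hr
  exact ⟨f, (funext hf : (M.submatrix f id).row = r) ▸ hli⟩

theorem exists_submatrix_det_ne_zero {m n K : Type*} [Fintype m] [Fintype n] [Field K]
    (M : Matrix m n K) : ∃ f : Fin M.rank → m, ∃ g : Fin M.rank → n, (M.submatrix f g).det ≠ 0 := by
  obtain ⟨f, hf⟩ := M.exists_linearIndependent_row_submatrix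
  set B := M.submatrix f id
  have hB : Bᵀ.rank = M.rank := by rw [rank_transpose, hf.rank_matrix, Fintype.card_fin]
  obtain ⟨g, hg⟩ := Bᵀ.exists_linearIndependent_row_submatrix
  refine ⟨f, g ∘ Fin.cast hB.symm, ?_⟩
  have hunit : IsUnit (M.submatrix f (g ∘ Fin.cast hB.symm)) :=
    linearIndependent_cols_iff_isUnit.mp (hg.comp _ (Fin.cast_injective _))
  exact ((isUnit_iff_isUnit_det _).mp hunit).ne_zero

theorem le_rank_of_submatrix_det_ne_zero {m n R : Type*} [Fintype n] [CommRing R] [IsDomain R]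
    (M : Matrix m n R) {r : ℕ} (f : Fin r → m) (g : Fin r → n)
    (h : (M.submatrix f g).det ≠ 0) : r ≤ M.rank :=
  calc r = (M.submatrix f g).rank := by rw [rank_of_det_ne_zero h, Fintype.card_fin]
    _ ≤ M.rank := M.rank_submatrix_le f g

theorem rank_map_le_rank_map_of_injective {m n A K R : Type*} [Fintype m] [Fintype n]
    [CommRing A] [Field K] [CommRing R] [IsDomain R] (P : Matrix m n A) (φ : A →+* K)
    {ψ : A →+* R} (hψ : Function.Injective ψ) : (P.map φ).rank ≤ (P.map ψ).rank := by
  obtain ⟨f, g, hdet⟩ := (P.map φ).exists_submatrix_det_ne_zero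
  refine le_rank_of_submatrix_det_ne_zero _ f g ?_
  rw [submatrix_map, ← RingHom.mapMatrix_apply, ← RingHom.map_det] at hdet ⊢
  exact (map_ne_zero_iff ψ hψ).mpr (ne_zero_of_map hdet)

end Matrix

namespace TN

open MvPolynomial

abbrev EntryII : Type := Σ B : (Σ d : ℕ, Fin d → ℕ), ((i : Fin B.1) → Fin (B.2 i))

def AssignmentII.entries (𝒯 : AssignmentII) : EntryII → ℂ := fun x => 𝒯 x.1 x.2

noncomputable def genericβII (N : TN) (L : N.LocalOrdering) :
    Matrix N.OutIdx N.InIdx (MvPolynomial EntryII ℚ) :=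
  fun iT iS => ∑ W : (e : N.E) → Fin (N.c e),
    if (∀ u : N.S, W (N.inEdge u) = iS u) ∧ (∀ u : N.T, W (N.outEdge u) = iT u) then
      ∏ v : N.V, X ⟨N.valenceType L v, fun i => W ((L v i).1.1)⟩
    else 0

theorem βII_eq_map_aeval (N : TN) (L : N.LocalOrdering) (𝒯 : AssignmentII) :
    N.βII L 𝒯 = (N.genericβII L).map (aeval 𝒯.entries) := by
  ext iT iS
  simp only [βII, genericβII, Matrix.map_apply, map_sum, apply_ite (aeval 𝒯.entries), map_prod,
    aeval_X, map_zero]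
  rfl

theorem rank_βII_le_of_algebraicIndependent (N : TN) (L : N.LocalOrdering)
    {𝒯₀ : AssignmentII} (hind : AlgebraicIndependent ℚ 𝒯₀.entries) (𝒯 : AssignmentII) :
    (N.βII L 𝒯).rank ≤ (N.βII L 𝒯₀).rank := by
  have h := (N.genericβII L).rank_map_le_rank_map_of_injective (aeval 𝒯.entries).toRingHom
    (ψ := (aeval 𝒯₀.entries).toRingHom) hind
  rwa [βII_eq_map_aeval, βII_eq_map_aeval]

end TN

/-- A fixed tensor family whose entries are algebraically independent over `ℚ` realizes the
Version II quantum max-flow of every tensor network simultaneously. -/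
theorem stmt_19 (N : TN) (L : N.LocalOrdering) (𝒯₀ : TN.AssignmentII)
    (hind : AlgebraicIndependent ℚ
      (fun x : Σ B : (Σ d : ℕ, Fin d → ℕ), ((i : Fin B.1) → Fin (B.2 i)) =>
        𝒯₀ x.1 x.2)) :
    (N.βII L 𝒯₀).rank = N.QMFII L := by
  have hgreatest : IsGreatest {r : ℕ | ∃ 𝒯 : TN.AssignmentII, (N.βII L 𝒯).rank = r}
      (N.βII L 𝒯₀).rank := by
    refine ⟨⟨𝒯₀, rfl⟩, ?_⟩
    rintro _ ⟨𝒯, rfl⟩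
    exact N.rank_βII_le_of_algebraicIndependent L hind 𝒯
  exact hgreatest.csSup_eq.symm
end
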